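/- arXiv:0901.1584 — 8 statements merged into one kernel-verified Lean document; each statement's English description precedes it below -/
import Mathlib

section
/- Let S be a Łukasiewicz logic and let Σ ⊆ S be a set of formulas which has no model. Then there exist natural numbers n, m and formulas φ₀, …, φ_{m−1} ∈ Σ such that ⊨ 1 ∸ nφ₀ ∸ … ∸ nφ_{m−1}, i.e. every truth assignment v satisfies v(1 ∸ nφ₀ ∸ … ∸ nφ_{m−1}) = 0 (here ∸ associates from left to right). -/
namespace Stmt0

/-- Formulas of Łukasiewicz logic, freely generated from atomic propositions indexed by `I`
by the binary connective `∸` and the unary connective `¬`. -/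
inductive LukFormula (I : Type*) : Type _ where
  | atom : I → LukFormula I
  | neg : LukFormula I → LukFormula I
  | sub : LukFormula I → LukFormula I → LukFormula I

namespace LukFormula

variable {I : Type*}

/-- The truth value of a formula under an assignment of truth values to the atoms. -/
def eval (v : I → ℝ) : LukFormula I → ℝ
  | atom i => v i
  | neg φ => 1 - eval v φ
  | sub φ ψ => max (eval v φ - eval v ψ) 0

/-- `nsub ψ n φ` is `ψ ∸ nφ`. -/
def nsub (ψ : LukFormula I) : ℕ → LukFormula I → LukFormula I
  | 0, _ => ψ
  | n + 1, φ => sub (nsub ψ n φ) φ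

/-- A truth assignment is determined by the truth values of the atoms, in `[0,1]`. -/
def IsAssignment (v : I → ℝ) : Prop := ∀ i, v i ∈ Set.Icc (0 : ℝ) 1

end LukFormula

/-!
The truth assignments form the compact cube `[0,1]^I`, on which every `eval · φ` is
continuous. If `Γ` has no model, the open sets `{v | 0 < v(φ)}`, `φ ∈ Γ`, cover the cube, so
finitely many of them, for `φ₀, …, φ_{m-1}`, already do. Then `v ↦ ∑ v(φᵢ)` is positive on
the cube, hence bounded below by some `ε > 0`, and for `n ≥ 1/ε` the truth value
`max (1 - n ∑ v(φᵢ)) 0` of `1 ∸ nφ₀ ∸ … ∸ nφ_{m-1}` vanishes everywhere.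
-/

lemma max_sub_zero_sub_eq {α : Type*} [AddCommGroup α] [LinearOrder α] [IsOrderedAddMonoid α]
    {a b c : α} (hc : 0 ≤ c) : max (max (a - b) 0 - c) 0 = max (a - (b + c)) 0 := by
  rcases le_total (a - b) 0 with h | h
  · rw [max_eq_right h, ← sub_sub, max_eq_right (sub_nonpos.mpr (h.trans hc)),
      max_eq_right (sub_nonpos.mpr hc)]
  · rw [max_eq_left h, sub_sub]

namespace LukFormula

variable {I : Type*} {v : I → ℝ}

lemma eval_mem_Icc (hv : IsAssignment v) (φ : LukFormula I) :
    eval v φ ∈ Set.Icc (0 : ℝ) 1 := by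
  induction φ with
  | atom i => exact hv i
  | neg φ ih =>
    obtain ⟨h₀, h₁⟩ := ih
    exact ⟨by simp only [eval]; linarith, by simp only [eval]; linarith⟩
  | sub φ ψ ihφ ihψ =>
    exact ⟨le_max_right _ _, max_le (by linarith [ihφ.2, ihψ.1]) zero_le_one⟩

lemma eval_nonneg (hv : IsAssignment v) (φ : LukFormula I) : 0 ≤ eval v φ :=
  (eval_mem_Icc hv φ).1

lemma continuous_eval (φ : LukFormula I) : Continuous fun v : I → ℝ => eval v φ := by
  induction φ with
  | atom i => exact continuous_apply i
  | neg φ ih => exact continuous_const.sub ih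
  | sub φ ψ ihφ ihψ => exact (ihφ.sub ihψ).max continuous_const

lemma isCompact_setOf_isAssignment : IsCompact {v : I → ℝ | IsAssignment v} := by
  convert isCompact_univ_pi fun _ : I => isCompact_Icc (a := (0 : ℝ)) (b := 1)
  simp [IsAssignment, Set.pi]

lemma eval_neg_sub_self (χ : LukFormula I) : eval v (neg (sub χ χ)) = 1 := by
  simp [eval]

lemma eval_nsub {ψ φ : LukFormula I} (hψ : 0 ≤ eval v ψ) (hφ : 0 ≤ eval v φ) (n : ℕ) :
    eval v (nsub ψ n φ) = max (eval v ψ - n * eval v φ) 0 := by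
  induction n with
  | zero => simp [nsub, hψ]
  | succ n ih =>
    rw [nsub, eval, ih, max_sub_zero_sub_eq hφ]
    push_cast
    ring_nf

lemma eval_foldl_nsub (hv : IsAssignment v) (n : ℕ) (l : List (LukFormula I))
    {ψ : LukFormula I} (hψ : 0 ≤ eval v ψ) :
    eval v (l.foldl (fun acc φ => nsub acc n φ) ψ) =
      max (eval v ψ - n * (l.map (eval v)).sum) 0 := by
  induction l generalizing ψ with
  | nil => simp [hψ]
  | cons φ l ih =>
    have hstep := eval_nsub hψ (eval_nonneg hv φ) n
    have hsum : 0 ≤ (n : ℝ) * (l.map (eval v)).sum :=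
      mul_nonneg n.cast_nonneg (List.sum_nonneg fun _ hx => by
        obtain ⟨ψ, -, rfl⟩ := List.mem_map.mp hx
        exact eval_nonneg hv ψ)
    rw [List.foldl_cons, ih (hstep ▸ le_max_right _ _), hstep, max_sub_zero_sub_eq hsum,
      List.map_cons, List.sum_cons, mul_add]

lemma exists_finset_forall_exists_eval_pos {Γ : Set (LukFormula I)}
    (hΓ : ¬ ∃ v : I → ℝ, IsAssignment v ∧ ∀ φ ∈ Γ, eval v φ = 0) :
    ∃ t : Finset (LukFormula I), ↑t ⊆ Γ ∧
      ∀ v : I → ℝ, IsAssignment v → ∃ φ ∈ t, 0 < eval v φ := by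
  have hcover : {v : I → ℝ | IsAssignment v} ⊆ ⋃ φ ∈ Γ, {v | 0 < eval v φ} := by
    intro v hv
    push Not at hΓ
    obtain ⟨φ, hφΓ, hφ⟩ := hΓ v hv
    exact Set.mem_biUnion hφΓ ((eval_nonneg hv φ).lt_of_ne' hφ)
  obtain ⟨s, hsΓ, hs, hsub⟩ := isCompact_setOf_isAssignment.elim_finite_subcover_image
    (fun φ _ => isOpen_lt continuous_const (continuous_eval φ)) hcover
  refine ⟨hs.toFinset, by simpa using hsΓ, fun v hv => ?_⟩
  obtain ⟨φ, hφs, hφ⟩ := Set.mem_iUnion₂.mp (hsub hv)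
  exact ⟨φ, hs.mem_toFinset.mpr hφs, hφ⟩

lemma exists_pos_forall_le_sum_eval {t : Finset (LukFormula I)}
    (ht : ∀ v : I → ℝ, IsAssignment v → ∃ φ ∈ t, 0 < eval v φ) :
    ∃ ε > 0, ∀ v : I → ℝ, IsAssignment v → ε ≤ ∑ φ ∈ t, eval v φ :=
  isCompact_setOf_isAssignment.exists_forall_le'
    (continuous_finsetSum t fun φ _ => continuous_eval φ).continuousOn fun v hv => by
      obtain ⟨φ, hφt, hφ⟩ := ht v hv
      exact hφ.trans_le (Finset.single_le_sum (fun ψ _ => eval_nonneg hv ψ) hφt)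

end LukFormula

open LukFormula

/-- If `Γ ⊆ S` has no model then there are `n`, `m` and formulas `φ₀, …, φ_{m-1} ∈ Γ` such that
`⊨ 1 ∸ nφ₀ ∸ … ∸ nφ_{m-1}`, where `1` abbreviates `¬(χ ∸ χ)` for a fixed formula `χ`. -/
theorem luk_compactness {I : Type*} (Γ : Set (LukFormula I))
    (hnomodel : ¬ ∃ v : I → ℝ, IsAssignment v ∧ ∀ φ ∈ Γ, eval v φ = 0)
    (χ : LukFormula I) :
    ∃ (n m : ℕ) (φs : Fin m → LukFormula I), (∀ i, φs i ∈ Γ) ∧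
      ∀ v : I → ℝ, IsAssignment v →
        eval v ((List.ofFn φs).foldl (fun acc φ => nsub acc n φ) (neg (sub χ χ))) = 0 := by
  obtain ⟨t, htΓ, ht⟩ := exists_finset_forall_exists_eval_pos hnomodel
  obtain ⟨ε, hε, hεt⟩ := exists_pos_forall_le_sum_eval ht
  obtain ⟨n, hn⟩ := exists_nat_gt ε⁻¹
  refine ⟨n, t.toList.length, t.toList.get,
    fun i => htΓ (Finset.mem_toList.mp (List.get_mem _ _)), fun v hv => ?_⟩
  rw [List.ofFn_get, eval_foldl_nsub hv n _ (by rw [eval_neg_sub_self]; exact zero_le_one),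
    eval_neg_sub_self, Finset.sum_map_toList]
  have hnε : 1 < n * ε := by rwa [inv_lt_iff_one_lt_mul₀ hε] at hn
  exact max_eq_right (by nlinarith [hεt v hv])

end Stmt0
end

section
/- Let S be a Łukasiewicz logic, let φ, ψ₀, …, ψ_{n−1} ∈ S and let Σ = {ψ_i : i < n}. Then Σ ⊨ φ if and only if there exists a natural number m such that ⊨ φ ∸ mψ₀ ∸ … ∸ mψ_{n−1} (where ∸ associates from left to right). -/
/-!
Restricted to the finitely many atoms that occur, the truth functions of `φ` and of
`g = ∑ v(ψᵢ)` are piecewise affine: they agree with affine maps on finitely many polyhedra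
covering the cube. The hypothesis `Σ ⊨ φ` says that `v(φ)` vanishes where `g` does. On a
bounded polyhedron on which both are affine, the inequality `v(φ) ≤ m·g` is preserved under
convex combinations, so it only has to be checked at the finitely many extreme points
(Krein–Milman), where it holds for `m` large. Finally
`v(φ ∸ mψ₀ ∸ … ∸ mψ_{n-1}) = max (v(φ) - m·g) 0`.
-/

namespace Stmt2

/-- Formulas of Łukasiewicz logic, freely generated from atomic propositions indexed by `I`
by the binary connective `∸` and the unary connective `¬`. -/
inductive LukFormula (I : Type*) : Type _ where
  | atom : I → LukFormula I
  | neg : LukFormula I → LukFormula I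
  | sub : LukFormula I → LukFormula I → LukFormula I

namespace LukFormula

variable {I : Type*}

/-- The truth value of a formula under an assignment of truth values to the atoms. -/
def eval (v : I → ℝ) : LukFormula I → ℝ
  | atom i => v i
  | neg φ => 1 - eval v φ
  | sub φ ψ => max (eval v φ - eval v ψ) 0

/-- `nsub ψ n φ` is `ψ ∸ nφ`. -/
def nsub (ψ : LukFormula I) : ℕ → LukFormula I → LukFormula I
  | 0, _ => ψ
  | n + 1, φ => sub (nsub ψ n φ) φ

/-- A truth assignment is determined by the truth values of the atoms, in `[0,1]`. -/
def IsAssignment (v : I → ℝ) : Prop := ∀ i, v i ∈ Set.Icc (0 : ℝ) 1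

end LukFormula

open LukFormula

open Set Filter Topology

section Polyhedron

variable {E : Type*}

def IsPolyhedron [AddCommGroup E] [Module ℝ E] (P : Set E) : Prop :=
  ∃ C : Set (E →ᵃ[ℝ] ℝ), C.Finite ∧ P = ⋂ c ∈ C, c ⁻¹' Iic 0

section VectorSpace

variable [AddCommGroup E] [Module ℝ E] {P Q : Set E}

lemma isPolyhedron_univ : IsPolyhedron (univ : Set E) :=
  ⟨∅, finite_empty, by simp⟩

lemma isPolyhedron_setOf_le (A B : E →ᵃ[ℝ] ℝ) : IsPolyhedron {x | A x ≤ B x} :=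
  ⟨{A - B}, finite_singleton _, by ext; simp⟩

lemma IsPolyhedron.inter (hP : IsPolyhedron P) (hQ : IsPolyhedron Q) : IsPolyhedron (P ∩ Q) := by
  obtain ⟨C, hC, rfl⟩ := hP
  obtain ⟨D, hD, rfl⟩ := hQ
  exact ⟨C ∪ D, hC.union hD, by rw [biInter_union]⟩

lemma IsPolyhedron.iInter {κ : Type*} [Finite κ] {P : κ → Set E} (hP : ∀ k, IsPolyhedron (P k)) :
    IsPolyhedron (⋂ k, P k) := by
  choose C hC hPC using hP
  exact ⟨⋃ k, C k, finite_iUnion hC, by simp_rw [biInter_iUnion, hPC]⟩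

lemma isPolyhedron_Icc {ι : Type*} [Finite ι] (a b : ι → ℝ) : IsPolyhedron (Icc a b) := by
  let π j : (ι → ℝ) →ᵃ[ℝ] ℝ := (LinearMap.proj j).toAffineMap
  have hIcc : Icc a b = ⋂ j, {x | AffineMap.const ℝ _ (a j) x ≤ π j x} ∩
      {x | π j x ≤ AffineMap.const ℝ _ (b j) x} := by
    ext x
    simp [π, Pi.le_def, forall_and]
  rw [hIcc]
  exact .iInter fun j => (isPolyhedron_setOf_le _ _).inter (isPolyhedron_setOf_le _ _)

lemma IsPolyhedron.convex (hP : IsPolyhedron P) : Convex ℝ P := by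
  obtain ⟨C, -, rfl⟩ := hP
  exact convex_iInter₂ fun c _ => (convex_Iic 0).affine_preimage c

/-- Otherwise `x` lies strictly between `y` and a point slightly beyond `x` on the line from `y`,
which is still feasible because the constraints inactive at `x` have slack there. -/
lemma eq_of_mem_extremePoints_of_active {C : Set (E →ᵃ[ℝ] ℝ)} (hC : C.Finite) {x y : E}
    (hx : x ∈ extremePoints ℝ (⋂ c ∈ C, c ⁻¹' Iic 0)) (hy : y ∈ ⋂ c ∈ C, c ⁻¹' Iic 0)
    (hactive : ∀ c ∈ C, c x = 0 → c y = 0) : y = x := by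
  simp only [mem_iInter₂, mem_preimage, mem_Iic] at hy
  have hxP := (mem_extremePoints.1 hx).1
  simp only [mem_iInter₂, mem_preimage, mem_Iic] at hxP
  have hline : ∀ (c : E →ᵃ[ℝ] ℝ) t, c (x + t • (x - y)) = c x + t * (c x - c y) := fun c t => by
    have h := c.apply_lineMap x y (-t)
    rw [AffineMap.lineMap_apply_module', AffineMap.lineMap_apply_ring'] at h
    rw [show x + t • (x - y) = -t • (y - x) + x by module, h]
    ring
  have hnear : ∀ᶠ t in 𝓝 (0 : ℝ), ∀ c ∈ C, c x + t * (c x - c y) ≤ 0 := by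
    refine (eventually_all_finite hC).2 fun c hc => ?_
    rcases (hxP c hc).lt_or_eq with hneg | hzero
    · have hcont : Continuous fun t : ℝ => c x + t * (c x - c y) := by fun_prop
      have hlim := hcont.tendsto 0
      simp only [zero_mul, add_zero] at hlim
      exact (hlim.eventually (eventually_lt_nhds hneg)).mono fun _ => le_of_lt
    · exact .of_forall fun t => by simp [hzero, hactive c hc hzero]
  obtain ⟨t, hzP, ht⟩ := ((hnear.filter_mono nhdsWithin_le_nhds).and
    (self_mem_nhdsWithin : ∀ᶠ t in 𝓝[>] (0 : ℝ), 0 < t)).exists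
  have hseg : x ∈ openSegment ℝ (x + t • (x - y)) y := by
    refine ⟨1 / (1 + t), t / (1 + t), by positivity, by positivity, by field_simp, ?_⟩
    have : 1 + t ≠ 0 := by positivity
    match_scalars <;> field_simp; ring
  refine ((mem_extremePoints.1 hx).2 _ ?_ _ ?_ hseg).2
  · simpa only [mem_iInter₂, mem_preimage, mem_Iic, hline] using hzP
  · simpa only [mem_iInter₂, mem_preimage, mem_Iic] using hy

lemma IsPolyhedron.finite_extremePoints (hP : IsPolyhedron P) : (extremePoints ℝ P).Finite := by
  obtain ⟨C, hC, rfl⟩ := hP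
  refine Finite.of_finite_image (f := fun x => {c ∈ C | c x = 0})
    (hC.finite_subsets.subset <| image_subset_iff.2 fun x _ => sep_subset _ _) ?_
  intro x hx y hy hxy
  refine (eq_of_mem_extremePoints_of_active hC hx (mem_extremePoints.1 hy).1 fun c hc hcx => ?_).symm
  exact ((Set.ext_iff.1 hxy c).1 ⟨hc, hcx⟩).2

end VectorSpace

lemma exists_nat_le_mul {a b : ℝ} (hb : 0 ≤ b) (hab : b = 0 → a ≤ 0) : ∃ m : ℕ, a ≤ m * b := by
  rcases hb.eq_or_lt with h | h
  · exact ⟨0, by simpa using hab h.symm⟩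
  · obtain ⟨m, hm⟩ := exists_nat_ge (a / b)
    exact ⟨m, (div_le_iff₀ h).1 hm⟩

variable [NormedAddCommGroup E] [NormedSpace ℝ E] [FiniteDimensional ℝ E] {P : Set E}

lemma IsPolyhedron.isClosed (hP : IsPolyhedron P) : IsClosed P := by
  obtain ⟨C, -, rfl⟩ := hP
  exact isClosed_biInter fun c _ => isClosed_Iic.preimage c.continuous_of_finiteDimensional

lemma IsPolyhedron.subset_convexHull_extremePoints (hP : IsPolyhedron P)
    (hb : Bornology.IsBounded P) : P ⊆ convexHull ℝ (extremePoints ℝ P) := by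
  have hK := closure_convexHull_extremePoints
    (Metric.isCompact_of_isClosed_isBounded hP.isClosed hb) hP.convex
  rw [hP.finite_extremePoints.isClosed_convexHull (𝕜 := ℝ) |>.closure_eq] at hK
  exact hK.ge

lemma IsPolyhedron.exists_le_nat_mul (hP : IsPolyhedron P) (hb : Bornology.IsBounded P)
    (f g : E →ᵃ[ℝ] ℝ) (hg : ∀ x ∈ P, 0 ≤ g x) (hfg : ∀ x ∈ P, g x = 0 → f x ≤ 0) :
    ∃ m : ℕ, ∀ x ∈ P, f x ≤ m * g x := by
  choose! m hm using fun u (hu : u ∈ extremePoints ℝ P) => exists_nat_le_mul (hg u hu.1) (hfg u hu.1)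
  obtain ⟨M, hM⟩ := (hP.finite_extremePoints.image m).bddAbove
  refine ⟨M, fun x hx => ?_⟩
  have hconv : Convex ℝ {x | f x ≤ ((M : ℝ) • g) x} := (isPolyhedron_setOf_le _ _).convex
  refine convexHull_min (fun u hu => ?_) hconv (hP.subset_convexHull_extremePoints hb hx)
  calc f u ≤ m u * g u := hm u hu
    _ ≤ M * g u := by
      gcongr
      · exact hg u hu.1
      · exact_mod_cast hM (mem_image_of_mem m hu)
    _ = ((M : ℝ) • g) u := rfl

end Polyhedron

section PiecewiseAffine

variable {E : Type*} [AddCommGroup E] [Module ℝ E] {f g : E → ℝ}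

def PiecewiseAffine (f : E → ℝ) : Prop :=
  ∃ (ι : Type) (_ : Finite ι) (P : ι → Set E) (A : ι → E →ᵃ[ℝ] ℝ),
    (∀ i, IsPolyhedron (P i)) ∧ (∀ x, ∃ i, x ∈ P i) ∧ ∀ i, EqOn f (A i) (P i)

lemma piecewiseAffine_affineMap (A : E →ᵃ[ℝ] ℝ) : PiecewiseAffine A :=
  ⟨Unit, inferInstance, fun _ => univ, fun _ => A, fun _ => isPolyhedron_univ,
    fun _ => ⟨(), mem_univ _⟩, fun _ => eqOn_refl _ _⟩

lemma piecewiseAffine_const (a : ℝ) : PiecewiseAffine fun _ : E => a :=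
  piecewiseAffine_affineMap (AffineMap.const ℝ E a)

lemma PiecewiseAffine.exists_common_pieces (hf : PiecewiseAffine f) (hg : PiecewiseAffine g) :
    ∃ (ι : Type) (_ : Finite ι) (P : ι → Set E) (A B : ι → E →ᵃ[ℝ] ℝ),
      (∀ i, IsPolyhedron (P i)) ∧ (∀ x, ∃ i, x ∈ P i) ∧
        (∀ i, EqOn f (A i) (P i)) ∧ ∀ i, EqOn g (B i) (P i) := by
  obtain ⟨ι, _, P, A, hP, hPcov, hA⟩ := hf
  obtain ⟨κ, _, Q, B, hQ, hQcov, hB⟩ := hg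
  refine ⟨ι × κ, inferInstance, fun p => P p.1 ∩ Q p.2, fun p => A p.1, fun p => B p.2,
    fun p => (hP p.1).inter (hQ p.2), ?_, fun p => (hA p.1).mono inter_subset_left,
    fun p => (hB p.2).mono inter_subset_right⟩
  intro x
  obtain ⟨i, hi⟩ := hPcov x
  obtain ⟨k, hk⟩ := hQcov x
  exact ⟨(i, k), hi, hk⟩

lemma PiecewiseAffine.add (hf : PiecewiseAffine f) (hg : PiecewiseAffine g) :
    PiecewiseAffine (f + g) := by
  obtain ⟨ι, _, P, A, B, hP, hcov, hA, hB⟩ := hf.exists_common_pieces hg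
  exact ⟨ι, inferInstance, P, A + B, hP, hcov, fun i x hx => by simp [hA i hx, hB i hx]⟩

lemma PiecewiseAffine.sub (hf : PiecewiseAffine f) (hg : PiecewiseAffine g) :
    PiecewiseAffine (f - g) := by
  obtain ⟨ι, _, P, A, B, hP, hcov, hA, hB⟩ := hf.exists_common_pieces hg
  exact ⟨ι, inferInstance, P, A - B, hP, hcov, fun i x hx => by simp [hA i hx, hB i hx]⟩

lemma PiecewiseAffine.sum {κ : Type*} (s : Finset κ) {f : κ → E → ℝ}
    (hf : ∀ k ∈ s, PiecewiseAffine (f k)) : PiecewiseAffine fun x => ∑ k ∈ s, f k x := by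
  classical
  induction s using Finset.induction_on with
  | empty => exact piecewiseAffine_const 0
  | insert k s hk ih =>
    simp only [Finset.sum_insert hk]
    exact (hf k (s.mem_insert_self k)).add (ih fun j hj => hf j (Finset.mem_insert_of_mem hj))

lemma PiecewiseAffine.max_zero (hf : PiecewiseAffine f) : PiecewiseAffine fun x => max (f x) 0 := by
  obtain ⟨ι, _, P, A, hP, hcov, hA⟩ := hf
  refine ⟨ι × Bool, inferInstance,
    fun p => P p.1 ∩ if p.2 then {x | 0 ≤ A p.1 x} else {x | A p.1 x ≤ 0},
    fun p => if p.2 then A p.1 else 0, fun ⟨i, b⟩ => ?_, fun x => ?_, fun ⟨i, b⟩ x hx => ?_⟩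
  · cases b
    exacts [(hP i).inter (isPolyhedron_setOf_le (A i) 0),
      (hP i).inter (isPolyhedron_setOf_le 0 (A i))]
  · obtain ⟨i, hi⟩ := hcov x
    rcases le_total 0 (A i x) with h | h
    exacts [⟨(i, true), hi, h⟩, ⟨(i, false), hi, h⟩]
  · obtain ⟨hxP, hx⟩ := hx
    cases b <;> simpa [hA i hxP] using hx

lemma PiecewiseAffine.exists_le_nat_mul {E : Type*} [NormedAddCommGroup E] [NormedSpace ℝ E]
    [FiniteDimensional ℝ E] {f g : E → ℝ} {K : Set E} (hf : PiecewiseAffine f)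
    (hg : PiecewiseAffine g) (hK : IsPolyhedron K) (hKb : Bornology.IsBounded K)
    (hg₀ : ∀ x ∈ K, 0 ≤ g x) (hfg : ∀ x ∈ K, g x = 0 → f x ≤ 0) :
    ∃ m : ℕ, ∀ x ∈ K, f x ≤ m * g x := by
  obtain ⟨ι, _, P, A, B, hP, hcov, hA, hB⟩ := hf.exists_common_pieces hg
  have hpiece : ∀ i, ∃ m : ℕ, ∀ x ∈ K ∩ P i, A i x ≤ m * B i x := fun i =>
    (hK.inter (hP i)).exists_le_nat_mul (hKb.subset inter_subset_left) (A i) (B i)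
      (fun x hx => hB i hx.2 ▸ hg₀ x hx.1)
      (fun x hx => by simpa only [← hA i hx.2, ← hB i hx.2] using hfg x hx.1)
  choose m hm using hpiece
  obtain ⟨M, hM⟩ := Finite.bddAbove_range m
  refine ⟨M, fun x hx => ?_⟩
  obtain ⟨i, hi⟩ := hcov x
  calc f x = A i x := hA i hi
    _ ≤ m i * B i x := hm i x ⟨hx, hi⟩
    _ ≤ M * g x := by
      rw [← hB i hi]
      gcongr
      · exact hg₀ x hx
      · exact_mod_cast hM (mem_range_self i)

end PiecewiseAffine

lemma max_sub_max_zero {t c : ℝ} (hc : 0 ≤ c) : max (max t 0 - c) 0 = max (t - c) 0 := by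
  rw [← max_sub_sub_right, max_assoc, max_eq_right (by linarith : 0 - c ≤ 0)]

namespace LukFormula

variable {I : Type*}

def atoms : LukFormula I → Set I
  | atom i => {i}
  | neg χ => atoms χ
  | sub χ₁ χ₂ => atoms χ₁ ∪ atoms χ₂

lemma finite_atoms : ∀ χ : LukFormula I, (atoms χ).Finite
  | atom i => finite_singleton i
  | neg χ => finite_atoms χ
  | sub χ₁ χ₂ => (finite_atoms χ₁).union (finite_atoms χ₂)

lemma eval_congr {v w : I → ℝ} : ∀ {χ : LukFormula I}, EqOn v w (atoms χ) → eval v χ = eval w χ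
  | atom i, h => h rfl
  | neg χ, h => congrArg (1 - ·) (eval_congr (χ := χ) h)
  | sub χ₁ χ₂, h => by
    simp only [eval, eval_congr (h.mono subset_union_left),
      eval_congr (h.mono subset_union_right)]

lemma eval_mem_Icc {v : I → ℝ} (hv : IsAssignment v) : ∀ χ : LukFormula I, eval v χ ∈ Icc 0 1
  | atom i => hv i
  | neg χ => by
    have := eval_mem_Icc hv χ
    simp only [eval, mem_Icc] at this ⊢
    constructor <;> linarith [this.1, this.2]
  | sub χ₁ χ₂ => by
    have h₁ := eval_mem_Icc hv χ₁
    have h₂ := eval_mem_Icc hv χ₂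
    simp only [eval, mem_Icc] at h₁ h₂ ⊢
    exact ⟨le_max_right _ _, max_le (by linarith) zero_le_one⟩

lemma eval_nsub {v : I → ℝ} (hv : IsAssignment v) (α χ : LukFormula I) :
    ∀ m : ℕ, eval v (nsub α m χ) = max (eval v α - m * eval v χ) 0
  | 0 => by simpa [nsub] using (max_eq_left (eval_mem_Icc hv α).1).symm
  | m + 1 => by
    rw [nsub, eval, eval_nsub hv α χ m, max_sub_max_zero (eval_mem_Icc hv χ).1]
    push_cast
    ring_nf

lemma eval_foldl_nsub {v : I → ℝ} (hv : IsAssignment v) (m : ℕ) :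
    ∀ (l : List (LukFormula I)) (α : LukFormula I),
      eval v (l.foldl (fun acc χ => nsub acc m χ) α) = max (eval v α - m * (l.map (eval v)).sum) 0
  | [], α => by simpa using (max_eq_left (eval_mem_Icc hv α).1).symm
  | χ :: l, α => by
    have hl : 0 ≤ (l.map (eval v)).sum :=
      List.sum_nonneg fun _ hx => by
        obtain ⟨χ', -, rfl⟩ := List.mem_map.1 hx
        exact (eval_mem_Icc hv χ').1
    rw [List.foldl_cons, eval_foldl_nsub hv m l, eval_nsub hv,
      max_sub_max_zero (mul_nonneg m.cast_nonneg hl), List.map_cons, List.sum_cons]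
    ring_nf

lemma isAssignment_extend {α : Type*} (f : α → I) {x : α → ℝ} (hx : ∀ a, x a ∈ Icc 0 1) :
    IsAssignment (Function.extend f x 0) := fun i => by
  classical
  rw [Function.extend_def]
  split_ifs
  exacts [hx _, ⟨le_rfl, zero_le_one⟩]

variable {E : Type*} [AddCommGroup E] [Module ℝ E]

lemma piecewiseAffine_eval (a : E →ᵃ[ℝ] (I → ℝ)) :
    ∀ χ : LukFormula I, PiecewiseAffine fun x => eval (a x) χ
  | atom i => piecewiseAffine_affineMap
    ((LinearMap.proj i : (I → ℝ) →ₗ[ℝ] ℝ).toAffineMap.comp a)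
  | neg χ => (piecewiseAffine_const 1).sub (piecewiseAffine_eval a χ)
  | sub χ₁ χ₂ => ((piecewiseAffine_eval a χ₁).sub (piecewiseAffine_eval a χ₂)).max_zero

end LukFormula

lemma exists_le_nat_mul_sum {I : Type*} {n : ℕ} (φ : LukFormula I) (ψ : Fin n → LukFormula I)
    (H : ∀ v : I → ℝ, IsAssignment v → (∀ i, eval v (ψ i) = 0) → eval v φ = 0) :
    ∃ m : ℕ, ∀ v : I → ℝ, IsAssignment v → eval v φ ≤ m * ∑ i, eval v (ψ i) := by
  set s := atoms φ ∪ ⋃ i, atoms (ψ i)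
  have : Fintype s := ((finite_atoms φ).union (finite_iUnion fun i => finite_atoms (ψ i))).fintype
  let e : (s → ℝ) →ᵃ[ℝ] I → ℝ := (Function.ExtendByZero.linearMap ℝ ((↑) : s → I)).toAffineMap
  have he : ∀ x ∈ Icc (0 : s → ℝ) 1, IsAssignment (e x) := fun x hx =>
    isAssignment_extend _ fun j => ⟨hx.1 j, hx.2 j⟩
  have hG₀ : ∀ x ∈ Icc (0 : s → ℝ) 1, 0 ≤ ∑ i, eval (e x) (ψ i) := fun x hx =>
    Finset.sum_nonneg fun i _ => (eval_mem_Icc (he x hx) (ψ i)).1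
  obtain ⟨m, hm⟩ := (piecewiseAffine_eval e φ).exists_le_nat_mul
    (PiecewiseAffine.sum Finset.univ fun i _ => piecewiseAffine_eval e (ψ i))
    (isPolyhedron_Icc 0 1) (Metric.isBounded_Icc 0 1) hG₀ fun x hx hG => by
      have hψ := (Finset.sum_eq_zero_iff_of_nonneg fun i _ => (eval_mem_Icc (he x hx) (ψ i)).1).1 hG
      exact (H _ (he x hx) fun i => hψ i (Finset.mem_univ i)).le
  refine ⟨m, fun v hv => ?_⟩
  have hrestrict : (fun j : s => v j) ∈ Icc 0 1 := ⟨fun j => (hv j).1, fun j => (hv j).2⟩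
  have heval : ∀ χ, atoms χ ⊆ s → eval (e fun j : s => v j) χ = eval v χ := fun χ hχ =>
    eval_congr fun i hi => Subtype.val_injective.extend_apply (fun j : s => v j) 0 ⟨i, hχ hi⟩
  have := hm _ hrestrict
  rwa [heval φ subset_union_left, Finset.sum_congr rfl fun i _ =>
    heval (ψ i) ((subset_iUnion (fun i => atoms (ψ i)) i).trans subset_union_right)] at this

/-- For `Σ = {ψ₀, …, ψ_{n-1}}` finite, `Σ ⊨ φ` if and only if there is `m` such that
`⊨ φ ∸ mψ₀ ∸ … ∸ mψ_{n-1}` (with `∸` associating from left to right). -/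
theorem finite_implication {I : Type*} {n : ℕ} (φ : LukFormula I) (ψ : Fin n → LukFormula I) :
    (∀ v : I → ℝ, IsAssignment v → (∀ i, eval v (ψ i) = 0) → eval v φ = 0) ↔
      ∃ m : ℕ, ∀ v : I → ℝ, IsAssignment v →
        eval v ((List.ofFn ψ).foldl (fun acc χ => nsub acc m χ) φ) = 0 := by
  have hfold : ∀ m v, IsAssignment v → eval v ((List.ofFn ψ).foldl (fun acc χ => nsub acc m χ) φ)
      = max (eval v φ - m * ∑ i, eval v (ψ i)) 0 := fun m v hv => by
    rw [eval_foldl_nsub hv, List.map_ofFn, List.sum_ofFn]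
    rfl
  constructor
  · intro H
    obtain ⟨m, hm⟩ := exists_le_nat_mul_sum φ ψ H
    exact ⟨m, fun v hv => by rw [hfold m v hv, max_eq_right_iff, sub_nonpos]; exact hm v hv⟩
  · rintro ⟨m, hm⟩ v hv hψ
    have h := hm v hv
    rw [hfold m v hv, max_eq_right_iff] at h
    simp only [hψ, Finset.sum_const_zero, mul_zero, sub_zero] at h
    exact le_antisymm h (eval_mem_Icc hv φ).1

end Stmt2
end

section
/- Let S be an arbitrary (not necessarily free) continuous propositional logic and let Σ ⊆ S. Then Σ is consistent (in the deduction system A1–A6 with Modus Ponens) if and only if Σ is satisfiable, i.e. there is a truth assignment v : S → [0,1] with v(φ) = 0 for all φ ∈ Σ. -/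
/-!
Soundness is a direct check of the axioms in `[0, 1]`. For completeness, fix any formula `θ`.
Halving and truncated sums of the falsity `¬(θ ∸ θ)` give formulas `dyadic θ m k` that the
deduction system provably treats like the dyadic numbers `min (k / 2 ^ m) 1`. Extend a consistent
`Γ` to a maximal consistent `Δ`. A weak deduction theorem shows that over `Δ` every formula that is
not deduced is provably at least some `2⁻ᴹ`, and prelinearity then gives, for `j < k`, that `Δ`
deduces `φ ≤ k / 2 ^ m` or `j / 2 ^ m ≤ φ`. So at every level `m`, `φ` is trapped between two
dyadics at distance at most `2 / 2 ^ m`. The value of `φ` is the infimum of its dyadic upper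
bounds, and transporting the traps through `¬`, `½` and `∸` by dyadic arithmetic shows that it is a
truth assignment; it vanishes on `Δ ⊇ Γ`.
-/

namespace Stmt7

/-- A continuous propositional logic: a set equipped with a binary operation `∸` and unary
operations `¬` and `½` (no axioms imposed). -/
structure CPL (S : Type*) where
  sub : S → S → S
  neg : S → S
  half : S → S

variable {S : Type*}

/-- A truth assignment on a continuous propositional logic: a map into `[0,1]` respecting
the connectives. -/
def CPL.IsTruthAssignment (L : CPL S) (v : S → ℝ) : Prop :=
  (∀ φ : S, v φ ∈ Set.Icc (0 : ℝ) 1) ∧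
  (∀ φ : S, v (L.neg φ) = 1 - v φ) ∧
  (∀ φ : S, v (L.half φ) = v φ / 2) ∧
  (∀ φ ψ : S, v (L.sub φ ψ) = max (v φ - v ψ) 0)

/-- `φ ∧ ψ` abbreviates `φ ∸ (φ ∸ ψ)`. -/
def CPL.land (L : CPL S) (φ ψ : S) : S := L.sub φ (L.sub φ ψ)

/-- The axiom schemes A1–A6 of continuous propositional logic. -/
inductive CPL.Axiom (L : CPL S) : S → Prop where
  | a1 (φ ψ : S) : CPL.Axiom L (L.sub (L.sub φ ψ) φ)
  | a2 (φ ψ ρ : S) : CPL.Axiom L (L.sub (L.sub (L.sub ρ φ) (L.sub ρ ψ)) (L.sub ψ φ))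
  | a3 (φ ψ : S) : CPL.Axiom L (L.sub (L.land φ ψ) (L.land ψ φ))
  | a4 (φ ψ : S) : CPL.Axiom L (L.sub (L.sub φ ψ) (L.sub (L.neg ψ) (L.neg φ)))
  | a5 (φ : S) : CPL.Axiom L (L.sub (L.half φ) (L.sub φ (L.half φ)))
  | a6 (φ : S) : CPL.Axiom L (L.sub (L.sub φ (L.half φ)) (L.half φ))

/-- Formal deduction from a set of premises `Γ`, using the axiom schemes A1–A6 and
Modus Ponens (from `φ` and `ψ ∸ φ` infer `ψ`). -/
inductive CPL.Deduces (L : CPL S) (Γ : Set S) : S → Prop where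
  | ax {φ : S} : CPL.Axiom L φ → CPL.Deduces L Γ φ
  | prem {φ : S} : φ ∈ Γ → CPL.Deduces L Γ φ
  | mp {φ ψ : S} : CPL.Deduces L Γ φ → CPL.Deduces L Γ (L.sub ψ φ) → CPL.Deduces L Γ ψ

theorem eq_of_forall_mem_Icc_two_pow {x y : ℝ} (c : ℝ)
    (h : ∀ m : ℕ, ∃ a b, b - a ≤ c / 2 ^ m ∧ x ∈ Set.Icc a b ∧ y ∈ Set.Icc a b) : x = y := by
  have hlim : Filter.Tendsto (fun m : ℕ => c / 2 ^ m) Filter.atTop (nhds 0) :=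
    tendsto_const_nhds.div_atTop (tendsto_pow_atTop_atTop_of_one_lt one_lt_two)
  have hle : |x - y| ≤ 0 := ge_of_tendsto' hlim fun m => by
    obtain ⟨a, b, hab, hx, hy⟩ := h m
    rw [abs_sub_le_iff]
    constructor <;> linarith [hx.1, hx.2, hy.1, hy.2]
  exact sub_eq_zero.1 (abs_nonpos_iff.1 hle)

theorem natCast_div_two_pow_le_add {j k c : ℕ} (m : ℕ) (h : k ≤ j + c) :
    (k : ℝ) / 2 ^ m ≤ j / 2 ^ m + c / 2 ^ m := by
  rw [← add_div]
  gcongr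
  exact_mod_cast h

theorem natCast_two_pow_sub_div {k m : ℕ} (hk : k ≤ 2 ^ m) :
    ((2 ^ m - k : ℕ) : ℝ) / 2 ^ m = 1 - k / 2 ^ m := by
  rw [Nat.cast_sub hk, sub_div, Nat.cast_pow, Nat.cast_two, div_self (by positivity)]

theorem natCast_sub_div_two_pow (j k m : ℕ) :
    ((k - j : ℕ) : ℝ) / 2 ^ m = max ((k : ℝ) / 2 ^ m - j / 2 ^ m) 0 := by
  rcases le_total j k with h | h
  · have : (j : ℝ) / 2 ^ m ≤ k / 2 ^ m := by gcongr
    rw [Nat.cast_sub h, sub_div, max_eq_left (by linarith)]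
  · have : (k : ℝ) / 2 ^ m ≤ j / 2 ^ m := by gcongr
    rw [Nat.sub_eq_zero_of_le h, Nat.cast_zero, zero_div, max_eq_right (by linarith)]

namespace CPL

/-- Truncated addition, with truth value `min (v a + v b) 1`. -/
def oplus (L : CPL S) (a b : S) : S := L.neg (L.sub (L.neg a) b)

def nsmul (L : CPL S) (a : S) : ℕ → S
  | 0 => L.sub a a
  | n + 1 => L.oplus (L.nsmul a n) a

/-- A formula with truth value `1`, i.e. a falsity; `θ` is arbitrary, as `S` has no constants. -/
def one (L : CPL S) (θ : S) : S := L.neg (L.sub θ θ)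

def dyadicUnit (L : CPL S) (θ : S) : ℕ → S
  | 0 => L.one θ
  | m + 1 => L.half (L.dyadicUnit θ m)

/-- A formula with truth value `min (k / 2 ^ m) 1`. -/
def dyadic (L : CPL S) (θ : S) (m k : ℕ) : S := L.nsmul (L.dyadicUnit θ m) k

/-- Since truth is the value `0`, this reads `v a ≤ v b`. -/
def Le (L : CPL S) (Γ : Set S) (a b : S) : Prop := L.Deduces Γ (L.sub a b)

def Equiv (L : CPL S) (Γ : Set S) (a b : S) : Prop := L.Le Γ a b ∧ L.Le Γ b a

def Consistent (L : CPL S) (Γ : Set S) : Prop := ¬ ∀ φ, L.Deduces Γ φ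

noncomputable def canonicalVal (L : CPL S) (θ : S) (Γ : Set S) (φ : S) : ℝ :=
  sInf {x | ∃ m k : ℕ, k ≤ 2 ^ m ∧ x = k / 2 ^ m ∧ L.Le Γ φ (L.dyadic θ m k)}

variable {L : CPL S} {Γ : Set S} {v : S → ℝ} {a b c d φ ψ χ θ : S} {m n j k : ℕ}

local notation:65 a:65 " ∸ " b:66 => CPL.sub L a b
local notation:max "∼" a:75 => CPL.neg L a
local notation:max "½" a:75 => CPL.half L a
local infixl:65 " ∔ " => CPL.oplus L
local infix:50 " ≼ " => CPL.Le L Γ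
local infix:50 " ≡ " => CPL.Equiv L Γ
local prefix:50 "⊢ " => CPL.Deduces L Γ

theorem sub_le_self (a b : S) : a ∸ b ≼ a := .ax (.a1 a b)

theorem land_comm_le (a b : S) : L.land a b ≼ L.land b a := .ax (.a3 a b)

theorem sub_le_neg_sub_neg (a b : S) : a ∸ b ≼ ∼b ∸ ∼a := .ax (.a4 a b)

theorem half_le_sub_half (a : S) : ½a ≼ a ∸ ½a := .ax (.a5 a)

theorem sub_half_le_half (a : S) : a ∸ ½a ≼ ½a := .ax (.a6 a)

theorem sub_le_sub_left (h : b ≼ a) (c : S) : c ∸ a ≼ c ∸ b := .mp h (.ax (.a2 a b c))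

theorem Le.trans (h₁ : a ≼ b) (h₂ : b ≼ c) : a ≼ c := .mp h₁ (sub_le_sub_left h₂ a)

instance : @Trans S S S (L.Le Γ) (L.Le Γ) (L.Le Γ) := ⟨Le.trans⟩

theorem land_le_right (a b : S) : L.land a b ≼ b := (land_comm_le a b).trans (sub_le_self b (b ∸ a))

theorem le_sub_of_deduces (h : ⊢ b) (a : S) : a ≼ a ∸ b := .mp h (land_le_right a b)

theorem Le.refl (a : S) : a ≼ a := (le_sub_of_deduces (.ax (.a1 a a)) a).trans (sub_le_self _ _)

theorem le_of_deduces (h : ⊢ a) (b : S) : a ≼ b := .mp h (sub_le_self a b)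

theorem sub_le_sub_right (h : a ≼ b) (c : S) : a ∸ c ≼ b ∸ c :=
  (le_sub_of_deduces h _).trans (.ax (.a2 c b a))

theorem sub_le_sub (h₁ : a ≼ b) (h₂ : d ≼ c) : a ∸ c ≼ b ∸ d :=
  (sub_le_sub_right h₁ c).trans (sub_le_sub_left h₂ b)

theorem sub_right_comm_le (a b c : S) : a ∸ b ∸ c ≼ a ∸ c ∸ b :=
  (sub_le_sub_left (land_le_right a c) _).trans (.ax (.a2 b (a ∸ c) a))

theorem le_neg_neg (a : S) : a ≼ ∼∼a :=
  (le_sub_of_deduces (Le.refl a) a).trans <| (sub_le_neg_sub_neg a (a ∸ a)).trans <|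
    (sub_le_neg_sub_neg _ _).trans (sub_le_self _ _)

theorem neg_neg_le (a : S) : ∼∼a ≼ a := .mp (le_neg_neg (∼a)) (sub_le_neg_sub_neg (∼∼a) a)

theorem neg_sub_neg_le (a b : S) : ∼b ∸ ∼a ≼ a ∸ b :=
  (sub_le_neg_sub_neg _ _).trans (sub_le_sub (neg_neg_le a) (le_neg_neg b))

theorem neg_le_neg (h : a ≼ b) : ∼b ≼ ∼a := .mp h (neg_sub_neg_le a b)

theorem le_neg_of_le_neg (h : a ≼ ∼b) : b ≼ ∼a := (le_neg_neg b).trans (neg_le_neg h)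

theorem le_neg_of_deduces (h : ⊢ b) (a : S) : a ≼ ∼b := le_neg_of_le_neg (le_of_deduces h _)

theorem sub_le_neg (a b : S) : a ∸ b ≼ ∼b := (sub_le_neg_sub_neg a b).trans (sub_le_self _ _)

theorem neg_sub_le_neg_sub (a b : S) : ∼a ∸ b ≼ ∼b ∸ a :=
  (sub_le_sub_left (neg_neg_le b) _).trans (neg_sub_neg_le (∼b) a)

theorem sub_neg_le_sub_neg (a b : S) : a ∸ ∼b ≼ b ∸ ∼a :=
  (sub_le_sub_right (le_neg_neg a) _).trans (neg_sub_neg_le b (∼a))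

/-- Both sides have truth value `1 - max (v a) (v b)`. -/
theorem neg_sub_sub_le (a b : S) : ∼b ∸ (a ∸ b) ≼ ∼a ∸ (b ∸ a) :=
  (sub_le_sub_left (neg_sub_neg_le a b) _).trans <|
    (land_comm_le (∼b) (∼a)).trans (sub_le_sub_left (sub_le_neg_sub_neg b a) _)

theorem oplus_comm_le (a b : S) : a ∔ b ≼ b ∔ a := neg_le_neg (neg_sub_le_neg_sub b a)

theorem oplus_le_oplus (h₁ : a ≼ b) (h₂ : c ≼ d) : a ∔ c ≼ b ∔ d :=
  neg_le_neg (sub_le_sub (neg_le_neg h₁) h₂)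

theorem le_self_oplus (a b : S) : a ≼ a ∔ b := le_neg_of_le_neg (sub_le_self (∼a) b)

theorem oplus_le_of_deduces (h : ⊢ b) (a : S) : a ∔ b ≼ a :=
  (neg_le_neg (le_sub_of_deduces h (∼a))).trans (neg_neg_le a)

theorem Deduces.oplus (ha : ⊢ a) (hb : ⊢ b) : ⊢ a ∔ b := .mp ha (oplus_le_of_deduces hb a)

theorem le_sub_oplus (a b : S) : a ≼ (a ∸ b) ∔ b := .mp (Le.refl (a ∸ b)) <| calc
  a ∸ ((a ∸ b) ∔ b) ≼ ∼∼a ∸ ((a ∸ b) ∔ b) := sub_le_sub_right (le_neg_neg a) _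
  _ ≼ ∼(a ∸ b) ∸ b ∸ ∼a := neg_sub_neg_le _ _
  _ ≼ ∼(a ∸ b) ∸ ∼a ∸ b := sub_right_comm_le _ _ _
  _ ≼ a ∸ (a ∸ b) ∸ b := sub_le_sub_right (neg_sub_neg_le a (a ∸ b)) b
  _ ≼ a ∸ b ∸ (a ∸ b) := sub_right_comm_le _ _ _

theorem oplus_sub_le (a b : S) : a ∔ b ∸ b ≼ a :=
  (le_neg_of_le_neg (le_sub_oplus (∼a) b)).trans (neg_neg_le a)

theorem sub_le_iff_le_oplus : a ∸ b ≼ c ↔ a ≼ c ∔ b :=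
  ⟨fun h => (le_sub_oplus a b).trans (oplus_le_oplus h (Le.refl b)),
    fun h => (sub_le_sub_right h b).trans (oplus_sub_le c b)⟩

/-- Both sides have truth value `max (v a) (v b)`. -/
theorem sub_oplus_comm_le (a b : S) : (a ∸ b) ∔ b ≼ (b ∸ a) ∔ a :=
  neg_le_neg <| (neg_sub_le_neg_sub _ _).trans <|
    (neg_sub_sub_le b a).trans (neg_sub_le_neg_sub _ _)

theorem le_oplus_sub (h : a ≼ ∼b) : a ≼ a ∔ b ∸ b :=
  (le_sub_of_deduces (le_neg_of_le_neg h) a).trans <| (sub_le_sub_right (le_neg_neg a) _).trans <|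
    (neg_sub_sub_le b (∼a)).trans (neg_sub_le_neg_sub _ _)

theorem sub_le_sub_sub_sub (a b : S) : a ∸ b ≼ a ∸ b ∸ (b ∸ a) := by
  have h : a ≼ (a ∸ b) ∔ b ∸ (b ∸ a) :=
    (le_oplus_sub (le_neg_of_le_neg (sub_le_neg b a))).trans
      (sub_le_sub_right ((oplus_comm_le _ _).trans (sub_oplus_comm_le b a)) _)
  calc a ∸ b ≼ (a ∸ b) ∔ b ∸ (b ∸ a) ∸ b := sub_le_sub_right h b
    _ ≼ (a ∸ b) ∔ b ∸ b ∸ (b ∸ a) := sub_right_comm_le _ _ _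
    _ ≼ a ∸ b ∸ (b ∸ a) := sub_le_sub_right (oplus_sub_le _ _) _

theorem le_of_sub_le_sub (h : a ∸ b ≼ b ∸ a) : a ≼ b :=
  .mp (sub_le_sub_sub_sub a b) (le_sub_of_deduces h _)

theorem le_land (h₁ : a ≼ b) (h₂ : a ≼ c) : a ≼ L.land b c :=
  (le_sub_of_deduces h₂ a).trans <| (land_comm_le a c).trans <|
    (sub_le_sub_left (sub_le_sub_left h₁ c) c).trans (land_comm_le c b)

/-- Prelinearity: `min (max (v a - v b) 0) (max (v c - v a) 0) = 0` when `v c ≤ v b`. -/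
theorem deduces_land_sub_sub (h : c ≼ b) (a : S) : ⊢ L.land (a ∸ b) (c ∸ a) :=
  .mp (sub_le_sub_sub_sub a b) (sub_le_sub_left (sub_le_sub_left (sub_le_sub_right h a) _) _)

theorem sub_oplus_le (a b c : S) : a ∸ (b ∔ c) ≼ a ∸ b ∸ c :=
  (sub_neg_le_sub_neg a (∼b ∸ c)).trans <|
    (sub_right_comm_le (∼b) c (∼a)).trans (sub_le_sub_right (neg_sub_neg_le a b) c)

theorem sub_sub_le_sub_oplus (a b c : S) : a ∸ b ∸ c ≼ a ∸ (b ∔ c) :=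
  (sub_le_sub_right (sub_le_neg_sub_neg a b) c).trans <|
    (sub_right_comm_le (∼b) (∼a) c).trans (sub_neg_le_sub_neg (∼b ∸ c) a)

theorem oplus_assoc_le (a b c : S) : a ∔ (b ∔ c) ≼ a ∔ b ∔ c :=
  neg_le_neg ((sub_le_sub_right (neg_neg_le _) c).trans (sub_sub_le_sub_oplus (∼a) b c))

theorem oplus_assoc_ge (a b c : S) : a ∔ b ∔ c ≼ a ∔ (b ∔ c) :=
  neg_le_neg ((sub_oplus_le (∼a) b c).trans (sub_le_sub_right (le_neg_neg _) c))

theorem oplus_oplus_oplus_comm_le (a b c d : S) : a ∔ b ∔ (c ∔ d) ≼ a ∔ c ∔ (b ∔ d) := calc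
  a ∔ b ∔ (c ∔ d) ≼ a ∔ (b ∔ (c ∔ d)) := oplus_assoc_ge _ _ _
  _ ≼ a ∔ (b ∔ c ∔ d) := oplus_le_oplus (Le.refl a) (oplus_assoc_le _ _ _)
  _ ≼ a ∔ (c ∔ b ∔ d) := oplus_le_oplus (Le.refl a) (oplus_le_oplus (oplus_comm_le _ _) (Le.refl d))
  _ ≼ a ∔ (c ∔ (b ∔ d)) := oplus_le_oplus (Le.refl a) (oplus_assoc_ge _ _ _)
  _ ≼ a ∔ c ∔ (b ∔ d) := oplus_assoc_le _ _ _

theorem oplus_sub_le_oplus_sub (a b c : S) : a ∔ b ∸ c ≼ a ∔ (b ∸ c) :=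
  sub_le_iff_le_oplus.2 <|
    (oplus_le_oplus (Le.refl a) (le_sub_oplus b c)).trans (oplus_assoc_le _ _ _)

theorem half_le_half (h : a ≼ b) : ½a ≼ ½b := le_of_sub_le_sub <| calc
  ½a ∸ ½b ≼ a ∸ ½a ∸ ½b := sub_le_sub_right (half_le_sub_half a) _
  _ ≼ a ∸ ½b ∸ ½a := sub_right_comm_le _ _ _
  _ ≼ b ∸ ½b ∸ ½a := sub_le_sub_right (sub_le_sub_right h _) _
  _ ≼ ½b ∸ ½a := sub_le_sub_right (sub_half_le_half b) _

theorem half_le_self (a : S) : ½a ≼ a := (half_le_sub_half a).trans (sub_le_self _ _)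

theorem Deduces.half (h : ⊢ a) : ⊢ ½a := .mp h (half_le_self a)

theorem le_half_oplus_half (a : S) : a ≼ ½a ∔ ½a :=
  (le_sub_oplus a (½a)).trans (oplus_le_oplus (sub_half_le_half a) (Le.refl _))

theorem half_oplus_half_le (a : S) : ½a ∔ ½a ≼ a := by
  have h : ∼a ≼ ∼½a ∸ ½a :=
    (le_sub_of_deduces (half_le_self a) (∼a)).trans <|
      (neg_sub_sub_le (½a) a).trans (sub_le_sub_left (half_le_sub_half a) _)
  exact (neg_le_neg h).trans (neg_neg_le a)

theorem le_half_of_le_sub (h : a ≼ b ∸ a) : a ≼ ½b := le_of_sub_le_sub <| calc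
  a ∸ ½b ≼ b ∸ a ∸ ½b := sub_le_sub_right h _
  _ ≼ b ∸ ½b ∸ a := sub_right_comm_le _ _ _
  _ ≼ ½b ∸ a := sub_le_sub_right (sub_half_le_half b) _

theorem half_oplus_le (a b : S) : ½(a ∔ b) ≼ ½a ∔ ½b := by
  have h : a ∔ b ∸ (½a ∔ ½b) ≼ ½a ∔ ½b := calc
    a ∔ b ∸ (½a ∔ ½b) ≼ b ∔ a ∸ ½a ∸ ½b :=
      (sub_oplus_le _ _ _).trans (sub_le_sub_right (sub_le_sub_right (oplus_comm_le a b) _) _)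
    _ ≼ b ∔ (a ∸ ½a) ∸ ½b := sub_le_sub_right (oplus_sub_le_oplus_sub _ _ _) _
    _ ≼ ½a ∔ b ∸ ½b :=
      sub_le_sub_right
        ((oplus_le_oplus (Le.refl b) (sub_half_le_half a)).trans (oplus_comm_le _ _)) _
    _ ≼ ½a ∔ (b ∸ ½b) := oplus_sub_le_oplus_sub _ _ _
    _ ≼ ½a ∔ ½b := oplus_le_oplus (Le.refl _) (sub_half_le_half b)
  refine le_of_sub_le_sub ?_
  calc ½(a ∔ b) ∸ (½a ∔ ½b) ≼ a ∔ b ∸ ½(a ∔ b) ∸ (½a ∔ ½b) :=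
        sub_le_sub_right (half_le_sub_half _) _
    _ ≼ a ∔ b ∸ (½a ∔ ½b) ∸ ½(a ∔ b) := sub_right_comm_le _ _ _
    _ ≼ ½a ∔ ½b ∸ ½(a ∔ b) := sub_le_sub_right h _

theorem half_sub_le (a b : S) : ½a ∸ b ≼ ½(a ∸ (b ∔ b)) := by
  refine sub_le_iff_le_oplus.2 ?_
  calc ½a ≼ ½((a ∸ (b ∔ b)) ∔ (b ∔ b)) := half_le_half (le_sub_oplus a _)
    _ ≼ ½(a ∸ (b ∔ b)) ∔ ½(b ∔ b) := half_oplus_le _ _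
    _ ≼ ½(a ∸ (b ∔ b)) ∔ b :=
      oplus_le_oplus (Le.refl _) ((half_oplus_le b b).trans (half_oplus_half_le b))

/-- Converse of `half_oplus_le` below truncation, i.e. when `v a / 2 + v b / 2 ≤ 1 / 2`. -/
theorem half_oplus_half_le_half (h : ½a ∔ ½b ≼ ∼(½a ∔ ½b)) : ½a ∔ ½b ≼ ½(a ∔ b) := by
  refine le_half_of_le_sub ((le_oplus_sub h).trans (sub_le_sub_right ?_ _))
  exact (oplus_oplus_oplus_comm_le _ _ _ _).trans
    (oplus_le_oplus (half_oplus_half_le a) (half_oplus_half_le b))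

theorem Equiv.refl (a : S) : a ≡ a := ⟨Le.refl a, Le.refl a⟩

theorem Equiv.symm (h : a ≡ b) : b ≡ a := ⟨h.2, h.1⟩

theorem Equiv.trans (h₁ : a ≡ b) (h₂ : b ≡ c) : a ≡ c := ⟨h₁.1.trans h₂.1, h₂.2.trans h₁.2⟩

theorem Equiv.of_deduces (ha : ⊢ a) (hb : ⊢ b) : a ≡ b := ⟨le_of_deduces ha b, le_of_deduces hb a⟩

theorem Equiv.sub (h₁ : a ≡ b) (h₂ : c ≡ d) : a ∸ c ≡ b ∸ d :=
  ⟨sub_le_sub h₁.1 h₂.2, sub_le_sub h₁.2 h₂.1⟩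

theorem Equiv.neg (h : a ≡ b) : ∼a ≡ ∼b := ⟨neg_le_neg h.2, neg_le_neg h.1⟩

theorem Equiv.oplus (h₁ : a ≡ b) (h₂ : c ≡ d) : a ∔ c ≡ b ∔ d :=
  ⟨oplus_le_oplus h₁.1 h₂.1, oplus_le_oplus h₁.2 h₂.2⟩

theorem oplus_comm (a b : S) : a ∔ b ≡ b ∔ a := ⟨oplus_comm_le a b, oplus_comm_le b a⟩

theorem oplus_assoc (a b c : S) : a ∔ b ∔ c ≡ a ∔ (b ∔ c) :=
  ⟨oplus_assoc_ge a b c, oplus_assoc_le a b c⟩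

theorem oplus_eq_of_deduces (h : ⊢ b) (a : S) : a ∔ b ≡ a :=
  ⟨oplus_le_of_deduces h a, le_self_oplus a b⟩

theorem sub_eq_of_deduces (h : ⊢ b) (a : S) : a ∸ b ≡ a := ⟨sub_le_self a b, le_sub_of_deduces h a⟩

theorem sub_oplus (a b c : S) : a ∸ (b ∔ c) ≡ a ∸ b ∸ c :=
  ⟨sub_oplus_le a b c, sub_sub_le_sub_oplus a b c⟩

theorem neg_oplus (a b : S) : ∼(a ∔ b) ≡ ∼a ∸ b := ⟨neg_neg_le _, le_neg_neg _⟩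

theorem neg_half (a : S) : ∼½a ≡ ∼a ∔ ½a :=
  (Equiv.neg ⟨half_le_sub_half a, sub_half_le_half a⟩).trans
    (Equiv.neg (Equiv.sub ⟨le_neg_neg a, neg_neg_le a⟩ (Equiv.refl _)))

theorem half_oplus_half (a : S) : ½a ∔ ½a ≡ a := ⟨half_oplus_half_le a, le_half_oplus_half a⟩

theorem deduces_nsmul_zero (a : S) : ⊢ L.nsmul a 0 := Le.refl a

theorem Deduces.nsmul (h : ⊢ a) : ∀ k, ⊢ L.nsmul a k
  | 0 => deduces_nsmul_zero a
  | k + 1 => (h.nsmul k).oplus h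

theorem nsmul_one (a : S) : L.nsmul a 1 ≡ a :=
  (oplus_comm _ _).trans (oplus_eq_of_deduces (deduces_nsmul_zero a) a)

theorem nsmul_add (a : S) (j : ℕ) : ∀ k, L.nsmul a (j + k) ≡ L.nsmul a j ∔ L.nsmul a k
  | 0 => (oplus_eq_of_deduces (deduces_nsmul_zero a) _).symm
  | k + 1 => ((nsmul_add a j k).oplus (Equiv.refl a)).trans (oplus_assoc _ _ _)

theorem nsmul_le_nsmul_of_le (a : S) (h : j ≤ k) : L.nsmul a j ≼ L.nsmul a k := by
  induction k, h using Nat.le_induction with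
  | base => exact Le.refl _
  | succ k _ ih => exact ih.trans (le_self_oplus _ a)

theorem nsmul_le_nsmul (h : a ≼ b) : ∀ k, L.nsmul a k ≼ L.nsmul b k
  | 0 => le_of_deduces (deduces_nsmul_zero a) _
  | k + 1 => oplus_le_oplus (nsmul_le_nsmul h k) h

theorem Equiv.nsmul (h : a ≡ b) (k : ℕ) : L.nsmul a k ≡ L.nsmul b k :=
  ⟨nsmul_le_nsmul h.1 k, nsmul_le_nsmul h.2 k⟩

theorem nsmul_two_mul (a : S) (k : ℕ) : L.nsmul a (2 * k) ≡ L.nsmul (a ∔ a) k := by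
  induction k with
  | zero => exact .of_deduces (deduces_nsmul_zero a) (deduces_nsmul_zero _)
  | succ k ih =>
    have h2 : L.nsmul a 2 ≡ a ∔ a := (nsmul_one a).oplus (Equiv.refl a)
    exact (nsmul_add a (2 * k) 2).trans (ih.oplus h2)

theorem half_le_nsmul_of_le_nsmul_two_mul (h : a ≼ L.nsmul b (2 * n)) : ½a ≼ L.nsmul b n := by
  rw [two_mul] at h
  exact .mp (Deduces.half (.mp h ((Equiv.refl a).sub (nsmul_add b n n)).2)) (half_sub_le a _)

theorem le_one (θ a : S) : a ≼ L.one θ := le_neg_of_deduces (Le.refl θ) a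

theorem dyadicUnit_le_dyadicUnit (θ : S) (h : m ≤ n) : L.dyadicUnit θ n ≼ L.dyadicUnit θ m := by
  induction n, h using Nat.le_induction with
  | base => exact Le.refl _
  | succ n _ ih => exact (half_le_self _).trans ih

theorem dyadicUnit_le_nsmul (h : L.one θ ≼ L.nsmul b (2 ^ m * n)) :
    L.dyadicUnit θ m ≼ L.nsmul b n := by
  induction m generalizing n with
  | zero => simpa [dyadicUnit] using h
  | succ m ih =>
    rw [pow_succ, mul_assoc] at h
    exact half_le_nsmul_of_le_nsmul_two_mul (ih h)

theorem dyadic_succ_two_mul (θ : S) (m k : ℕ) : L.dyadic θ (m + 1) (2 * k) ≡ L.dyadic θ m k :=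
  (nsmul_two_mul _ k).trans ((half_oplus_half _).nsmul k)

theorem dyadic_add_two_pow_mul (θ : S) (m k : ℕ) :
    ∀ d, L.dyadic θ (m + d) (2 ^ d * k) ≡ L.dyadic θ m k
  | 0 => by simpa using Equiv.refl _
  | d + 1 => by
    rw [pow_succ', mul_assoc]
    exact (dyadic_succ_two_mul θ (m + d) _).trans (dyadic_add_two_pow_mul θ m k d)

theorem dyadic_two_pow (θ : S) : ∀ m, L.dyadic θ m (2 ^ m) ≡ L.one θ
  | 0 => nsmul_one _
  | m + 1 => by
    rw [pow_succ']
    exact (dyadic_succ_two_mul θ m _).trans (dyadic_two_pow θ m)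

theorem neg_dyadicUnit (θ : S) : ∀ m, ∼L.dyadicUnit θ m ≡ L.dyadic θ m (2 ^ m - 1)
  | 0 => .of_deduces (.mp (Le.refl θ) (neg_neg_le _)) (deduces_nsmul_zero _)
  | m + 1 => by
    have e : 2 ^ (m + 1) - 1 = 2 * (2 ^ m - 1) + 1 := by
      have := Nat.one_le_two_pow (n := m)
      rw [pow_succ]
      omega
    rw [e]
    exact (neg_half _).trans
      (((neg_dyadicUnit θ m).trans (dyadic_succ_two_mul θ m _).symm).oplus (Equiv.refl _))

theorem dyadic_le_neg_dyadicUnit (hk : k < 2 ^ m) : L.dyadic θ m k ≼ ∼L.dyadicUnit θ m :=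
  (nsmul_le_nsmul_of_le _ (by omega : k ≤ 2 ^ m - 1)).trans (neg_dyadicUnit θ m).2

theorem dyadic_succ_sub_dyadicUnit (hk : k < 2 ^ m) :
    L.dyadic θ m (k + 1) ∸ L.dyadicUnit θ m ≡ L.dyadic θ m k :=
  ⟨oplus_sub_le _ _, le_oplus_sub (dyadic_le_neg_dyadicUnit hk)⟩

theorem neg_dyadic (hk : k ≤ 2 ^ m) : ∼L.dyadic θ m k ≡ L.dyadic θ m (2 ^ m - k) := by
  induction k with
  | zero =>
    exact (Equiv.neg (.of_deduces (deduces_nsmul_zero _) (Le.refl θ))).trans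
      (dyadic_two_pow θ m).symm
  | succ k ih =>
    have e : 2 ^ m - k = 2 ^ m - (k + 1) + 1 := by omega
    have h := (neg_oplus _ _).trans ((ih (by omega)).sub (Equiv.refl (L.dyadicUnit θ m)))
    rw [e] at h
    exact h.trans (dyadic_succ_sub_dyadicUnit (by omega))

theorem dyadic_sub (hk : k ≤ 2 ^ m) (j : ℕ) :
    L.dyadic θ m k ∸ L.dyadic θ m j ≡ L.dyadic θ m (k - j) := by
  induction j with
  | zero => exact sub_eq_of_deduces (deduces_nsmul_zero _) _
  | succ j ih =>
    refine (sub_oplus _ _ _).trans ((ih.sub (Equiv.refl _)).trans ?_)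
    rcases lt_or_ge j k with hjk | hjk
    · rw [show k - j = k - (j + 1) + 1 by omega]
      exact dyadic_succ_sub_dyadicUnit (by omega)
    · rw [Nat.sub_eq_zero_of_le hjk, Nat.sub_eq_zero_of_le (by omega)]
      exact .of_deduces (le_of_deduces (deduces_nsmul_zero _) _) (deduces_nsmul_zero _)

theorem half_dyadic (hk : k ≤ 2 ^ m) : ½L.dyadic θ m k ≡ L.dyadic θ (m + 1) k := by
  induction k with
  | zero => exact .of_deduces (deduces_nsmul_zero _).half (deduces_nsmul_zero _)
  | succ k ih =>
    have hz : ½L.dyadic θ m k ∔ ½L.dyadicUnit θ m ≡ L.dyadic θ (m + 1) (k + 1) :=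
      (ih (by omega)).oplus (Equiv.refl _)
    have hm : 2 ^ (m + 1) = 2 ^ m * 2 := pow_succ 2 m
    -- `(k + 1) / 2 ^ (m + 1) ≤ 1 / 2`, so the halves below add up without truncation
    have hneg : L.dyadic θ (m + 1) (k + 1) ≼ ∼L.dyadic θ (m + 1) (k + 1) :=
      (nsmul_le_nsmul_of_le _ (by omega)).trans (neg_dyadic (by omega)).2
    exact ⟨(half_oplus_le _ _).trans hz.1,
      hz.2.trans (half_oplus_half_le_half (hz.1.trans (hneg.trans (neg_le_neg hz.1))))⟩

theorem Consistent.not_deduces_one (hΓ : L.Consistent Γ) (θ : S) : ¬ ⊢ L.one θ :=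
  fun h => hΓ fun φ => .mp h (le_one θ φ)

theorem Consistent.not_deduces_dyadicUnit (hΓ : L.Consistent Γ) (θ : S) (m : ℕ) :
    ¬ ⊢ L.dyadicUnit θ m :=
  fun h => hΓ.not_deduces_one θ (.mp (h.nsmul (2 ^ m)) (dyadic_two_pow θ m).2)

theorem Consistent.not_dyadic_le_dyadic (hΓ : L.Consistent Γ) (hjk : j < k) (hk : k ≤ 2 ^ m) :
    ¬ L.dyadic θ m k ≼ L.dyadic θ m j := fun h =>
  hΓ.not_deduces_dyadicUnit θ m <| .mp (.mp h (dyadic_sub hk j).2)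
    ((nsmul_one _).2.trans (nsmul_le_nsmul_of_le _ (by omega : 1 ≤ k - j)))

theorem Deduces.mono {Γ' : Set S} (hΓ : Γ ⊆ Γ') (h : ⊢ φ) : L.Deduces Γ' φ := by
  induction h with
  | ax hφ => exact .ax hφ
  | prem hφ => exact .prem (hΓ hφ)
  | mp _ _ ih₁ ih₂ => exact .mp ih₁ ih₂

theorem Deduces.exists_mem_of_sUnion {c : Set (Set S)} (hc : IsChain (· ⊆ ·) c)
    (hne : c.Nonempty) (h : L.Deduces (⋃₀ c) φ) : ∃ Γ ∈ c, L.Deduces Γ φ := by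
  induction h with
  | ax hφ => exact ⟨hne.some, hne.some_mem, .ax hφ⟩
  | prem hφ =>
    obtain ⟨Γ, hΓ, hφΓ⟩ := Set.mem_sUnion.1 hφ
    exact ⟨Γ, hΓ, .prem hφΓ⟩
  | mp _ _ ih₁ ih₂ =>
    obtain ⟨Γ₁, hΓ₁, h₁⟩ := ih₁
    obtain ⟨Γ₂, hΓ₂, h₂⟩ := ih₂
    rcases hc.total hΓ₁ hΓ₂ with h₁₂ | h₂₁
    · exact ⟨Γ₂, hΓ₂, .mp (h₁.mono h₁₂) h₂⟩
    · exact ⟨Γ₁, hΓ₁, .mp h₁ (h₂.mono h₂₁)⟩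

theorem exists_maximal_consistent_superset (hΓ : L.Consistent Γ) :
    ∃ Δ, Γ ⊆ Δ ∧ Maximal L.Consistent Δ := by
  obtain ⟨θ, -⟩ := not_forall.1 hΓ
  refine zorn_subset_nonempty {Δ | L.Consistent Δ} (fun c hcons hc hne => ?_) Γ hΓ
  refine ⟨⋃₀ c, fun hall => ?_, fun _ => Set.subset_sUnion_of_mem⟩
  obtain ⟨Δ, hΔ, h⟩ := Deduces.exists_mem_of_sUnion hc hne (hall (L.one θ))
  exact (hcons hΔ).not_deduces_one θ h

/-- A weak deduction theorem. -/
theorem exists_le_nsmul_of_deduces_insert (h : L.Deduces (insert ψ Γ) χ) :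
    ∃ n, χ ≼ L.nsmul ψ n := by
  induction h with
  | ax hφ => exact ⟨0, le_of_deduces (.ax hφ) _⟩
  | prem hφ =>
    rcases hφ with rfl | hφ
    · exact ⟨1, (nsmul_one _).2⟩
    · exact ⟨0, le_of_deduces (.prem hφ) _⟩
  | @mp φ χ _ _ ih₁ ih₂ =>
    obtain ⟨n, hn⟩ := ih₁
    obtain ⟨n', hn'⟩ := ih₂
    exact ⟨n' + n, (le_sub_oplus χ φ).trans ((oplus_le_oplus hn' hn).trans (nsmul_add ψ n' n).2)⟩

theorem exists_dyadicUnit_le (hΓ : Maximal L.Consistent Γ) (θ : S) (hψ : ¬ ⊢ ψ) :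
    ∃ M, L.dyadicUnit θ M ≼ ψ := by
  have hins : L.Deduces (insert ψ Γ) (L.one θ) := by
    by_contra h
    exact hψ (.prem (hΓ.mem_of_prop_insert fun hall => h (hall _)))
  obtain ⟨n, hn⟩ := exists_le_nsmul_of_deduces_insert hins
  refine ⟨n, (dyadicUnit_le_nsmul (n := 1) ?_).trans (nsmul_one ψ).1⟩
  rw [mul_one]
  exact hn.trans (nsmul_le_nsmul_of_le _ Nat.lt_two_pow_self.le)

theorem dyadic_le_of_not_le_dyadic (hΓ : Maximal L.Consistent Γ) (hjk : j < k)
    (h : ¬ φ ≼ L.dyadic θ m k) : L.dyadic θ m j ≼ φ := by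
  by_contra h'
  obtain ⟨M₁, h₁⟩ := exists_dyadicUnit_le hΓ θ h
  obtain ⟨M₂, h₂⟩ := exists_dyadicUnit_le hΓ θ h'
  refine hΓ.1.not_deduces_dyadicUnit θ (max M₁ M₂) (.mp
    (deduces_land_sub_sub (nsmul_le_nsmul_of_le (L.dyadicUnit θ m) hjk.le) φ) (le_land ?_ ?_))
  · exact (dyadicUnit_le_dyadicUnit θ (le_max_left M₁ M₂)).trans h₁
  · exact (dyadicUnit_le_dyadicUnit θ (le_max_right M₁ M₂)).trans h₂

theorem exists_dyadic_bracket (hΓ : Maximal L.Consistent Γ) (θ φ : S) (m : ℕ) :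
    ∃ j k, j ≤ k ∧ k ≤ 2 ^ m ∧ k ≤ j + 2 ∧ L.dyadic θ m j ≼ φ ∧ φ ≼ L.dyadic θ m k := by
  classical
  have hone : φ ≼ L.dyadic θ m (2 ^ m) := (le_one θ φ).trans (dyadic_two_pow θ m).2
  have hex : ∃ k, φ ≼ L.dyadic θ m k := ⟨2 ^ m, hone⟩
  have hk : Nat.find hex ≤ 2 ^ m := Nat.find_min' hex hone
  refine ⟨Nat.find hex - 2, Nat.find hex, by omega, hk, by omega, ?_, Nat.find_spec hex⟩
  rcases lt_or_ge (Nat.find hex) 2 with h2 | h2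
  · rw [Nat.sub_eq_zero_of_le h2.le]
    exact le_of_deduces (deduces_nsmul_zero _) φ
  · exact dyadic_le_of_not_le_dyadic hΓ (by omega)
      (Nat.find_min hex (by omega : Nat.find hex - 1 < Nat.find hex))

theorem IsTruthAssignment.apply_axiom (hv : L.IsTruthAssignment v) (h : L.Axiom φ) : v φ = 0 := by
  obtain ⟨hrange, hneg, hhalf, hsub⟩ := hv
  cases h with
  | a1 φ ψ =>
    have := (hrange φ).1
    have := (hrange ψ).1
    simp only [hsub, max_def]
    split_ifs <;> linarith
  | a5 φ | a6 φ =>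
    have := (hrange φ).1
    simp only [hsub, hhalf, max_def]
    split_ifs <;> linarith
  | _ =>
    simp only [CPL.land, hsub, hneg, max_def]
    split_ifs <;> linarith

theorem IsTruthAssignment.apply_eq_zero_of_deduces (hv : L.IsTruthAssignment v)
    (hΓ : ∀ φ ∈ Γ, v φ = 0) (h : L.Deduces Γ φ) : v φ = 0 := by
  induction h with
  | ax hφ => exact hv.apply_axiom hφ
  | prem hφ => exact hΓ _ hφ
  | @mp φ ψ _ _ ih₁ ih₂ =>
    rw [hv.2.2.2, ih₁, sub_zero, max_eq_left (hv.1 ψ).1] at ih₂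
    exact ih₂

theorem IsTruthAssignment.apply_one (hv : L.IsTruthAssignment v) (θ : S) : v (L.one θ) = 1 := by
  rw [CPL.one, hv.2.1, hv.2.2.2, sub_self, max_self, sub_zero]

theorem canonicalVal_le (hk : k ≤ 2 ^ m) (h : φ ≼ L.dyadic θ m k) :
    L.canonicalVal θ Γ φ ≤ k / 2 ^ m :=
  csInf_le ⟨0, by rintro _ ⟨m, k, -, rfl, -⟩; positivity⟩ ⟨m, k, hk, rfl, h⟩

theorem div_two_pow_le_of_dyadic_le (hΓ : L.Consistent Γ) (hj : j ≤ 2 ^ n)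
    (h : L.dyadic θ n j ≼ L.dyadic θ m k) : (j : ℝ) / 2 ^ n ≤ k / 2 ^ m := by
  by_contra hlt
  rw [not_le, div_lt_div_iff₀ (by positivity) (by positivity)] at hlt
  have hkj : 2 ^ n * k < 2 ^ m * j := by exact_mod_cast (by linarith : (2 : ℝ) ^ n * k < 2 ^ m * j)
  refine hΓ.not_dyadic_le_dyadic (θ := θ) (m := n + m) hkj ?_ ?_
  · rw [pow_add, mul_comm (2 ^ n)]
    exact Nat.mul_le_mul_left _ hj
  · refine (dyadic_add_two_pow_mul θ n j m).1.trans (h.trans ?_)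
    rw [add_comm n m]
    exact (dyadic_add_two_pow_mul θ m k n).2

theorem le_canonicalVal (hΓ : L.Consistent Γ) (hj : j ≤ 2 ^ n) (h : L.dyadic θ n j ≼ φ) :
    (j : ℝ) / 2 ^ n ≤ L.canonicalVal θ Γ φ :=
  le_csInf ⟨1, 0, 1, le_rfl, by norm_num, (le_one θ φ).trans (nsmul_one _).2⟩
    fun _ ⟨_, _, _, hx, hφ⟩ => hx ▸ div_two_pow_le_of_dyadic_le hΓ hj (h.trans hφ)

theorem canonicalVal_mem_Icc (hΓ : L.Consistent Γ) (hj : j ≤ 2 ^ m) (hk : k ≤ 2 ^ m)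
    (h₁ : L.dyadic θ m j ≼ φ) (h₂ : φ ≼ L.dyadic θ m k) :
    L.canonicalVal θ Γ φ ∈ Set.Icc ((j : ℝ) / 2 ^ m) (k / 2 ^ m) :=
  ⟨le_canonicalVal hΓ hj h₁, canonicalVal_le hk h₂⟩

theorem canonicalVal_eq_zero_of_deduces (hΓ : L.Consistent Γ) (h : ⊢ φ) :
    L.canonicalVal θ Γ φ = 0 := by
  have h0 := canonicalVal_mem_Icc (θ := θ) (m := 0) (j := 0) (k := 0) hΓ
    (Nat.zero_le _) (Nat.zero_le _)
    (le_of_deduces (deduces_nsmul_zero _) φ) (le_of_deduces h _)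
  simp only [CharP.cast_eq_zero, zero_div, Set.Icc_self, Set.mem_singleton_iff] at h0
  exact h0

theorem canonicalVal_neg (hΓ : Maximal L.Consistent Γ) (θ φ : S) :
    L.canonicalVal θ Γ (∼φ) = 1 - L.canonicalVal θ Γ φ := by
  refine eq_of_forall_mem_Icc_two_pow 2 fun m => ?_
  obtain ⟨j, k, hjk, hk, hkj, h₁, h₂⟩ := exists_dyadic_bracket hΓ θ φ m
  have hφ := canonicalVal_mem_Icc hΓ.1 (hjk.trans hk) hk h₁ h₂
  have hnφ := canonicalVal_mem_Icc hΓ.1 (Nat.sub_le _ _) (Nat.sub_le _ _)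
    ((neg_dyadic hk).2.trans (neg_le_neg h₂)) ((neg_le_neg h₁).trans (neg_dyadic (hjk.trans hk)).1)
  rw [natCast_two_pow_sub_div hk, natCast_two_pow_sub_div (hjk.trans hk)] at hnφ
  have := natCast_div_two_pow_le_add m hkj
  exact ⟨_, _, by push_cast at this; linarith, hnφ, by linarith [hφ.2], by linarith [hφ.1]⟩

theorem canonicalVal_half (hΓ : Maximal L.Consistent Γ) (θ φ : S) :
    L.canonicalVal θ Γ (½φ) = L.canonicalVal θ Γ φ / 2 := by
  refine eq_of_forall_mem_Icc_two_pow 2 fun m => ?_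
  obtain ⟨j, k, hjk, hk, hkj, h₁, h₂⟩ := exists_dyadic_bracket hΓ θ φ m
  have hφ := canonicalVal_mem_Icc hΓ.1 (hjk.trans hk) hk h₁ h₂
  have hm : 2 ^ m ≤ 2 ^ (m + 1) := Nat.pow_le_pow_right two_pos m.le_succ
  have hhφ := canonicalVal_mem_Icc hΓ.1 ((hjk.trans hk).trans hm) (hk.trans hm)
    ((half_dyadic (hjk.trans hk)).2.trans (half_le_half h₁))
    ((half_le_half h₂).trans (half_dyadic hk).1)
  rw [pow_succ, ← div_div, ← div_div] at hhφ
  have := natCast_div_two_pow_le_add m hkj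
  have : (0 : ℝ) ≤ 2 / 2 ^ m := by positivity
  exact ⟨_, _, by push_cast at *; linarith, hhφ, by linarith [hφ.1], by linarith [hφ.2]⟩

theorem canonicalVal_sub (hΓ : Maximal L.Consistent Γ) (θ φ ψ : S) :
    L.canonicalVal θ Γ (φ ∸ ψ) = max (L.canonicalVal θ Γ φ - L.canonicalVal θ Γ ψ) 0 := by
  refine eq_of_forall_mem_Icc_two_pow 4 fun m => ?_
  obtain ⟨a, a', haa, ha', ha'a, hφ₁, hφ₂⟩ := exists_dyadic_bracket hΓ θ φ m
  obtain ⟨b, b', hbb, hb', hb'b, hψ₁, hψ₂⟩ := exists_dyadic_bracket hΓ θ ψ m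
  have hφ := canonicalVal_mem_Icc hΓ.1 (haa.trans ha') ha' hφ₁ hφ₂
  have hψ := canonicalVal_mem_Icc hΓ.1 (hbb.trans hb') hb' hψ₁ hψ₂
  have hsub := canonicalVal_mem_Icc hΓ.1 (j := a - b') (k := a' - b) (by omega) (by omega)
    ((dyadic_sub (haa.trans ha') b').2.trans (sub_le_sub hφ₁ hψ₂))
    ((sub_le_sub hφ₂ hψ₁).trans (dyadic_sub ha' b).1)
  rw [natCast_sub_div_two_pow, natCast_sub_div_two_pow] at hsub
  refine ⟨_, _, ?_, hsub, max_le_max (by linarith [hφ.1, hψ.2]) le_rfl,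
    max_le_max (by linarith [hφ.2, hψ.1]) le_rfl⟩
  have := natCast_div_two_pow_le_add m ha'a
  have := natCast_div_two_pow_le_add m hb'b
  have : (a : ℝ) / 2 ^ m ≤ a' / 2 ^ m := by gcongr
  have : (b : ℝ) / 2 ^ m ≤ b' / 2 ^ m := by gcongr
  have : (4 : ℝ) / 2 ^ m = 2 / 2 ^ m + 2 / 2 ^ m := by ring
  calc _ ≤ |((a' : ℝ) / 2 ^ m - b / 2 ^ m) - (a / 2 ^ m - b' / 2 ^ m)| :=
        (le_abs_self _).trans (abs_max_sub_max_le_abs _ _ _)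
    _ ≤ 4 / 2 ^ m := abs_le.2 ⟨by push_cast at *; linarith, by push_cast at *; linarith⟩

theorem isTruthAssignment_canonicalVal (hΓ : Maximal L.Consistent Γ) (θ : S) :
    L.IsTruthAssignment (L.canonicalVal θ Γ) := by
  refine ⟨fun φ => ?_, canonicalVal_neg hΓ θ, canonicalVal_half hΓ θ, canonicalVal_sub hΓ θ⟩
  simpa using canonicalVal_mem_Icc (θ := θ) (m := 0) (j := 0) (k := 1) hΓ.1 (by norm_num) le_rfl
    (le_of_deduces (deduces_nsmul_zero _) φ) ((le_one θ φ).trans (nsmul_one _).2)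

end CPL

/-- A set `Γ` of formulas of an arbitrary continuous propositional logic is consistent
(does not deduce every formula) if and only if it is satisfiable. -/
theorem consistent_iff_satisfiable [Nonempty S] (L : CPL S) (Γ : Set S) :
    (¬ ∀ φ : S, CPL.Deduces L Γ φ) ↔
      ∃ v : S → ℝ, L.IsTruthAssignment v ∧ ∀ φ ∈ Γ, v φ = 0 := by
  obtain ⟨θ⟩ := ‹Nonempty S›
  constructor
  · intro hΓ
    obtain ⟨Δ, hΓΔ, hΔ⟩ := CPL.exists_maximal_consistent_superset hΓ
    exact ⟨L.canonicalVal θ Δ, CPL.isTruthAssignment_canonicalVal hΔ θ,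
      fun φ hφ => CPL.canonicalVal_eq_zero_of_deduces hΔ.1 (.prem (hΓΔ hφ))⟩
  · rintro ⟨v, hv, hΓ⟩ hall
    have h := hv.apply_eq_zero_of_deduces hΓ (hall (L.one θ))
    rw [hv.apply_one] at h
    exact one_ne_zero h

end Stmt7
end

section
/- In the Łukasiewicz logic generated by a single atomic proposition P, let φ_n = 1 ∸ 2(1 ∸ nP) (i.e. (1 ∸ nP reduced twice from 1), where 1 abbreviates ¬(P∸P)) and Σ = {φ_n : n ∈ ℕ, n ≥ 1}. Then for every truth assignment v, v(φ_n) = 0 if and only if v(P) ≤ 1/(2n); consequently Σ ⊨ P, but there is no finite subset Σ₀ ⊆ Σ with Σ₀ ⊨ P. -/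
namespace Stmt10

/-- Formulas of Łukasiewicz logic generated by atomic propositions indexed by `I`. -/
inductive LukFormula (I : Type*) : Type _ where
  | atom : I → LukFormula I
  | neg : LukFormula I → LukFormula I
  | sub : LukFormula I → LukFormula I → LukFormula I

namespace LukFormula

variable {I : Type*}

/-- The truth value of a formula under an assignment of truth values to the atoms. -/
def eval (v : I → ℝ) : LukFormula I → ℝ
  | atom i => v i
  | neg φ => 1 - eval v φ
  | sub φ ψ => max (eval v φ - eval v ψ) 0

/-- `nsub ψ n φ` is `ψ ∸ nφ`. -/
def nsub (ψ : LukFormula I) : ℕ → LukFormula I → LukFormula I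
  | 0, _ => ψ
  | n + 1, φ => sub (nsub ψ n φ) φ

/-- A truth assignment is determined by the truth values of the atoms, in `[0,1]`. -/
def IsAssignment (v : I → ℝ) : Prop := ∀ i, v i ∈ Set.Icc (0 : ℝ) 1

end LukFormula

open LukFormula

/-- The single atomic proposition `P`. -/
def P : LukFormula Unit := .atom ()

/-- `1` abbreviates `¬(P ∸ P)`. -/
def one : LukFormula Unit := .neg (.sub P P)

/-- `φ_n = 1 ∸ 2(1 ∸ nP)`. -/
def phi (n : ℕ) : LukFormula Unit := nsub one 2 (nsub one n P)

/-! Truncated subtraction of a nonnegative value composes additively,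
`v(ψ ∸ nφ) = max(v(ψ) - n v(φ), 0)`, so `v(φ_n) = max(1 - 2 max(1 - n v(P), 0), 0)`,
which vanishes exactly when `v(P) ≤ 1/(2n)`.
By the Archimedean property only `v(P) = 0` satisfies all of these bounds, whereas finitely many
`φ_n`, with `n ≤ N`, are all modelled by `v(P) = 1/(2(N+1)) > 0`. -/

lemma max_max_sub_zero {a b : ℝ} (hb : 0 ≤ b) : max (max a 0 - b) 0 = max (a - b) 0 := by
  rcases le_total a 0 with ha | ha
  · rw [max_eq_right ha, max_eq_right (by linarith), max_eq_right (by linarith)]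
  · rw [max_eq_left ha]

namespace LukFormula

variable {I : Type*} {v : I → ℝ}

theorem eval_nsub {ψ φ : LukFormula I} (hψ : 0 ≤ eval v ψ) (hφ : 0 ≤ eval v φ) (n : ℕ) :
    eval v (nsub ψ n φ) = max (eval v ψ - n * eval v φ) 0 := by
  induction n with
  | zero => simpa [nsub] using hψ
  | succ n ih =>
    rw [nsub, eval, ih, max_max_sub_zero hφ]
    push_cast
    ring_nf

end LukFormula

@[simp]
lemma eval_one (v : Unit → ℝ) : eval v one = 1 := by
  simp [one, eval]

lemma eval_phi {v : Unit → ℝ} (hv : IsAssignment v) (n : ℕ) :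
    eval v (phi n) = max (1 - 2 * max (1 - n * v ()) 0) 0 := by
  have hP : 0 ≤ eval v P := (hv ()).1
  have hQ : eval v (nsub one n P) = max (1 - n * v ()) 0 := by
    rw [eval_nsub (by simp) hP, eval_one]
    rfl
  rw [phi, eval_nsub (by simp) (hQ ▸ le_max_right _ _), hQ, eval_one]
  norm_num

theorem eval_phi_eq_zero_iff {v : Unit → ℝ} (hv : IsAssignment v) {n : ℕ} (hn : 1 ≤ n) :
    eval v (phi n) = 0 ↔ v () ≤ 1 / (2 * (n : ℝ)) := by
  have hn' : (1 : ℝ) ≤ n := by exact_mod_cast hn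
  rw [eval_phi hv, max_eq_right_iff, sub_nonpos, le_div_iff₀ (by positivity)]
  rcases le_total (1 - n * v ()) 0 with h | h
  · rw [max_eq_right h]
    constructor <;> intro <;> nlinarith
  · rw [max_eq_left h]
    constructor <;> intro <;> nlinarith

theorem eval_P_eq_zero_of_forall_eval_phi {v : Unit → ℝ} (hv : IsAssignment v)
    (h : ∀ n : ℕ, 1 ≤ n → eval v (phi n) = 0) : eval v P = 0 := by
  change v () = 0
  refine le_antisymm (le_of_not_gt fun hpos => ?_) (hv ()).1
  obtain ⟨n, hn⟩ := exists_nat_one_div_lt (mul_pos two_pos hpos)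
  have hle := (eval_phi_eq_zero_iff hv n.succ_pos).1 (h (n + 1) n.succ_pos)
  rw [mul_comm, ← div_div] at hle
  push_cast at hle
  linarith

theorem exists_assignment_models_phi_le_not_P (N : ℕ) :
    ∃ v : Unit → ℝ, IsAssignment v ∧ (∀ n : ℕ, 1 ≤ n → n ≤ N → eval v (phi n) = 0) ∧
      eval v P ≠ 0 := by
  have hN : (1 : ℝ) ≤ 2 * (N + 1) := by linarith [N.cast_nonneg (α := ℝ)]
  have hv : IsAssignment fun _ : Unit => 1 / (2 * ((N : ℝ) + 1)) :=
    fun _ => ⟨by positivity, (div_le_one (by positivity)).2 hN⟩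
  refine ⟨_, hv, fun n hn hnN => (eval_phi_eq_zero_iff hv hn).2 ?_,
    one_div_ne_zero (by positivity)⟩
  have : (n : ℝ) ≤ N := by exact_mod_cast hnN
  gcongr
  linarith

/-- With `Σ = {φ_n : n ≥ 1}`: for every truth assignment `v`, `v(φ_n) = 0` iff
`v(P) ≤ 1/(2n)`; consequently `Σ ⊨ P`, yet no finite subset `Σ₀ ⊆ Σ` satisfies `Σ₀ ⊨ P`. -/
theorem infinitary_entailment :
    (∀ n : ℕ, 1 ≤ n → ∀ v : Unit → ℝ, IsAssignment v →
      (eval v (phi n) = 0 ↔ v () ≤ 1 / (2 * (n : ℝ)))) ∧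
    (∀ v : Unit → ℝ, IsAssignment v →
      (∀ n : ℕ, 1 ≤ n → eval v (phi n) = 0) → eval v P = 0) ∧
    ¬ ∃ Γ₀ : Set (LukFormula Unit),
        Γ₀ ⊆ {ψ : LukFormula Unit | ∃ n : ℕ, 1 ≤ n ∧ ψ = phi n} ∧ Γ₀.Finite ∧
        ∀ v : Unit → ℝ, IsAssignment v → (∀ ψ ∈ Γ₀, eval v ψ = 0) → eval v P = 0 := by
  refine ⟨fun n hn v hv => eval_phi_eq_zero_iff hv hn,
    fun v hv => eval_P_eq_zero_of_forall_eval_phi hv, ?_⟩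
  rintro ⟨Γ₀, hΓ₀, hfin, hentails⟩
  obtain ⟨t, ht, htfin, rfl⟩ := hfin.exists_subset_finite_image_eq (f := phi) (s := Set.Ici 1)
    fun ψ hψ => by
      obtain ⟨n, hn, rfl⟩ := hΓ₀ hψ
      exact ⟨n, hn, rfl⟩
  obtain ⟨N, hN⟩ := htfin.bddAbove
  obtain ⟨v, hv, hphi, hP⟩ := exists_assignment_models_phi_le_not_P N
  exact hP (hentails v hv (by rintro _ ⟨n, hn, rfl⟩; exact hphi n (ht hn) (hN hn)))

end Stmt10
end

section
/- Let (Ω, F, μ) be a probability space and let M = L¹(F, [0,1]). For every sub-σ-algebra F₁ ⊆ F, the subset L¹(F₁, [0,1]) ⊆ M contains 0, is closed under the operations ¬, ½, ∸, and is closed in the L¹ metric. Conversely, if N ⊆ M is nonempty, contains 0, is closed under ¬, ½ and ∸, and is closed in the L¹ metric, then there is a sub-σ-algebra G ⊆ F (containing all μ-null sets) such that N is exactly the set of elements of M admitting a G-measurable representative, namely G = σ(N), the smallest such σ-algebra making every member of N measurable. -/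
/-!
The σ-algebra is `σ(N) = {s | 1ₛ ∈ N}`. Truncated addition `min (f + g) 1 = ¬(¬f ∸ g)` makes it
closed under finite unions, and L¹-closedness (through dominated convergence) under countable
ones. Every `σ(N)`-measurable `g : Ω → [0,1]` lies in `N`, as the pointwise limit of the dyadic
layer cakes `⌊2ⁿ g⌋ / 2ⁿ = ∑ᵢ 2⁻ⁿ · 1{g ≥ (i + 1) / 2ⁿ}`. In particular `N` contains the
constants, so for `f ∈ N` the indicators `1{f > c} = lim min (2ⁿ (f ∸ c)) 1` lie in `N`: `f` is
`σ(N)`-measurable. Minimality: if `1ₛ` has a `G'`-measurable representative `g`, then `s` agrees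
with `{g = 1}` up to a null set.
-/

namespace Stmt15

open MeasureTheory Set

/-- The set of (representatives of) elements of `L¹(G, [0,1])` inside `L¹(F, [0,1])`:
`F`-measurable `[0,1]`-valued functions admitting a `G`-measurable representative
modulo `μ`-null sets. -/
def RVSet {Ω : Type*} (F : MeasurableSpace Ω) (μ : @Measure Ω F)
    (G : MeasurableSpace Ω) : Set (Ω → ℝ) :=
  {f | Measurable[F] f ∧ (∀ ω, f ω ∈ Icc (0 : ℝ) 1) ∧
    ∃ g : Ω → ℝ, Measurable[G] g ∧ f =ᵐ[μ] g}

open Filter Topology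
open scoped symmDiff

section RVSet

variable {Ω : Type*} {F G : MeasurableSpace Ω} {μ : @Measure Ω F} {f g : Ω → ℝ}

theorem RVSet.map₂_mem {φ : ℝ → ℝ → ℝ} (hφ : Measurable (Function.uncurry φ))
    (hφI : ∀ x ∈ Icc (0 : ℝ) 1, ∀ y ∈ Icc (0 : ℝ) 1, φ x y ∈ Icc (0 : ℝ) 1)
    (hf : f ∈ RVSet F μ G) (hg : g ∈ RVSet F μ G) :
    (fun ω => φ (f ω) (g ω)) ∈ RVSet F μ G := by
  obtain ⟨hfm, hfI, f', hf'm, hff'⟩ := hf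
  obtain ⟨hgm, hgI, g', hg'm, hgg'⟩ := hg
  refine ⟨hφ.comp (hfm.prodMk hgm), fun ω => hφI _ (hfI ω) _ (hgI ω),
    fun ω => φ (f' ω) (g' ω), hφ.comp (hf'm.prodMk hg'm), ?_⟩
  filter_upwards [hff', hgg'] with ω h₁ h₂
  rw [h₁, h₂]

theorem RVSet.map_mem {ψ : ℝ → ℝ} (hψ : Measurable ψ)
    (hψI : ∀ x ∈ Icc (0 : ℝ) 1, ψ x ∈ Icc (0 : ℝ) 1) (hf : f ∈ RVSet F μ G) :
    (fun ω => ψ (f ω)) ∈ RVSet F μ G :=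
  RVSet.map₂_mem (φ := fun x _ => ψ x) (hψ.comp measurable_fst) (fun x hx _ _ => hψI x hx) hf hf

theorem const_mem_RVSet {c : ℝ} (hc : c ∈ Icc (0 : ℝ) 1) : (fun _ => c) ∈ RVSet F μ G :=
  ⟨measurable_const, fun _ => hc, fun _ => c, measurable_const, .rfl⟩

theorem mem_RVSet_of_measurable (hG : G ≤ F) (hf : Measurable[G] f)
    (hfI : ∀ ω, f ω ∈ Icc (0 : ℝ) 1) : f ∈ RVSet F μ G :=
  ⟨hf.mono hG le_rfl, hfI, f, hf, .rfl⟩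

end RVSet

theorem sum_range_ite_add_one_le_eq_floor {M : ℕ} {y : ℝ} (h0 : 0 ≤ y) (hM : y ≤ M) :
    ∑ i ∈ Finset.range M, (if ((i : ℝ) + 1) ≤ y then (1 : ℝ) else 0) = ⌊y⌋₊ := by
  have hiff : ∀ i : ℕ, ((i : ℝ) + 1 ≤ y ↔ i < ⌊y⌋₊) := fun i => by
    rw [Nat.lt_iff_add_one_le, Nat.le_floor_iff h0]; push_cast; rfl
  have hfloor : ⌊y⌋₊ ≤ M := Nat.floor_le_of_le hM
  simp only [hiff, Finset.sum_boole]
  rw [show {i ∈ Finset.range M | i < ⌊y⌋₊} = Finset.range ⌊y⌋₊ by ext; simp; omega]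
  simp

theorem indicator_one_mem_Icc {Ω : Type*} (s : Set Ω) (ω : Ω) :
    s.indicator 1 ω ∈ Icc (0 : ℝ) 1 := by
  by_cases h : ω ∈ s <;> simp [h]

section ClosedSubstructure

variable {Ω : Type*} {mΩ : MeasurableSpace Ω} {μ : Measure Ω}

theorem measurableSet_of_ae_eq {G : MeasurableSpace Ω} (hG : G ≤ mΩ)
    (hnull : ∀ s, MeasurableSet[mΩ] s → μ s = 0 → MeasurableSet[G] s) {s t : Set Ω}
    (hs : MeasurableSet[mΩ] s) (ht : MeasurableSet[G] t) (hst : s =ᵐ[μ] t) :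
    MeasurableSet[G] s := by
  have hts : MeasurableSet[G] (t ∆ s) :=
    hnull _ ((hG _ ht).symmDiff hs) (measure_symmDiff_eq_zero_iff.2 hst.symm)
  simpa using ht.symmDiff hts

structure IsClosedSubstructure (μ : Measure Ω) (N : Set (Ω → ℝ)) : Prop where
  measurable_and_mem_Icc : ∀ f ∈ N, Measurable f ∧ ∀ ω, f ω ∈ Icc (0 : ℝ) 1
  zero_mem : (fun _ => (0 : ℝ)) ∈ N
  one_sub_mem : ∀ f ∈ N, (fun ω => 1 - f ω) ∈ N
  half_mem : ∀ f ∈ N, (fun ω => f ω / 2) ∈ N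
  tsub_mem : ∀ f g : Ω → ℝ, f ∈ N → g ∈ N → (fun ω => max (f ω - g ω) 0) ∈ N
  mem_of_approx : ∀ f : Ω → ℝ, Measurable f → (∀ ω, f ω ∈ Icc (0 : ℝ) 1) →
    (∀ ε : ℝ, 0 < ε → ∃ g ∈ N, ∫ ω, |f ω - g ω| ∂μ < ε) → f ∈ N

namespace IsClosedSubstructure

variable {N : Set (Ω → ℝ)} {f g : Ω → ℝ}

theorem measurable (hN : IsClosedSubstructure μ N) (hf : f ∈ N) : Measurable f :=
  (hN.measurable_and_mem_Icc f hf).1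

theorem mem_Icc (hN : IsClosedSubstructure μ N) (hf : f ∈ N) (ω : Ω) : f ω ∈ Icc (0 : ℝ) 1 :=
  (hN.measurable_and_mem_Icc f hf).2 ω

theorem min_add_mem (hN : IsClosedSubstructure μ N) (hf : f ∈ N) (hg : g ∈ N) :
    (fun ω => min (f ω + g ω) 1) ∈ N := by
  have h := hN.one_sub_mem _ (hN.tsub_mem _ _ (hN.one_sub_mem f hf) hg)
  convert h using 2 with ω
  rcases le_total (f ω + g ω) 1 with hle | hle
  · rw [min_eq_left hle, max_eq_left (by linarith)]; ring
  · rw [min_eq_right hle, max_eq_right (by linarith)]; ring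

theorem div_two_pow_mem (hN : IsClosedSubstructure μ N) (hf : f ∈ N) (n : ℕ) :
    (fun ω => f ω / 2 ^ n) ∈ N := by
  induction n with
  | zero => simpa using hf
  | succ n ih => simpa [pow_succ, div_div] using hN.half_mem _ ih

theorem min_two_pow_mul_mem (hN : IsClosedSubstructure μ N) (hf : f ∈ N) (n : ℕ) :
    (fun ω => min (2 ^ n * f ω) 1) ∈ N := by
  induction n with
  | zero => simpa [min_eq_left (hN.mem_Icc hf _).2] using hf
  | succ n ih =>
    convert hN.min_add_mem ih ih using 2 with ω
    rcases le_total (2 ^ n * f ω) 1 with hle | hle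
    · rw [min_eq_left hle, pow_succ]; ring_nf
    · have hdouble : (2 : ℝ) ^ (n + 1) * f ω = 2 * (2 ^ n * f ω) := by ring
      rw [min_eq_right hle, min_eq_right (by linarith), min_eq_right (by norm_num)]

theorem sum_mem (hN : IsClosedSubstructure μ N) {ι : Type*} {s : Finset ι} {h : ι → Ω → ℝ}
    (hs : ∀ i ∈ s, h i ∈ N) (hle : ∀ ω, ∑ i ∈ s, h i ω ≤ 1) :
    (fun ω => ∑ i ∈ s, h i ω) ∈ N := by
  induction s using Finset.cons_induction with
  | empty => simpa using hN.zero_mem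
  | cons a s ha ih =>
    simp only [Finset.sum_cons] at hle ⊢
    have ih' := ih (fun i hi => hs i (Finset.mem_cons_of_mem hi))
      (fun ω => by linarith [hle ω, (hN.mem_Icc (hs a (Finset.mem_cons_self a s)) ω).1])
    convert hN.min_add_mem (hs a (Finset.mem_cons_self a s)) ih' using 2 with ω
    exact (min_eq_left (hle ω)).symm

theorem indicator_compl_mem (hN : IsClosedSubstructure μ N) {s : Set Ω}
    (hs : s.indicator 1 ∈ N) : sᶜ.indicator 1 ∈ N := by
  convert hN.one_sub_mem _ hs using 1
  rw [Set.indicator_compl]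
  rfl

theorem indicator_union_mem (hN : IsClosedSubstructure μ N) {s t : Set Ω}
    (hs : s.indicator 1 ∈ N) (ht : t.indicator 1 ∈ N) : (s ∪ t).indicator 1 ∈ N := by
  convert hN.min_add_mem hs ht using 1
  funext ω
  by_cases hωs : ω ∈ s <;> by_cases hωt : ω ∈ t <;> simp [hωs, hωt]

theorem mem_of_tendsto_integral (hN : IsClosedSubstructure μ N) (hf : Measurable f)
    (hfI : ∀ ω, f ω ∈ Icc (0 : ℝ) 1) {g : ℕ → Ω → ℝ} (hg : ∀ n, g n ∈ N)
    (hlim : Tendsto (fun n => ∫ ω, |f ω - g n ω| ∂μ) atTop (𝓝 0)) : f ∈ N :=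
  hN.mem_of_approx f hf hfI fun _ hε =>
    let ⟨n, hn⟩ := (hlim.eventually_lt_const hε).exists
    ⟨g n, hg n, hn⟩

theorem mem_of_ae_eq (hN : IsClosedSubstructure μ N) (hf : Measurable f)
    (hfI : ∀ ω, f ω ∈ Icc (0 : ℝ) 1) (hg : g ∈ N) (hfg : f =ᵐ[μ] g) : f ∈ N := by
  refine hN.mem_of_tendsto_integral hf hfI (fun _ => hg) ?_
  have : ∫ ω, |f ω - g ω| ∂μ = 0 :=
    integral_eq_zero_of_ae (hfg.mono fun ω h => by simp [h])
  simp [this]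

variable [IsFiniteMeasure μ]

theorem mem_of_tendsto (hN : IsClosedSubstructure μ N) (hf : Measurable f)
    (hfI : ∀ ω, f ω ∈ Icc (0 : ℝ) 1) {g : ℕ → Ω → ℝ} (hg : ∀ n, g n ∈ N)
    (hlim : ∀ ω, Tendsto (fun n => g n ω) atTop (𝓝 (f ω))) : f ∈ N := by
  refine hN.mem_of_tendsto_integral hf hfI hg ?_
  have hdom := tendsto_integral_of_dominated_convergence (μ := μ) (fun _ => 1)
    (fun n => ((hf.sub (hN.measurable (hg n))).abs).aestronglyMeasurable) (integrable_const 1)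
    (fun n => ae_of_all _ fun ω => by
      rw [Real.norm_eq_abs, abs_abs]
      exact abs_sub_le_of_nonneg_of_le (hfI ω).1 (hfI ω).2 (hN.mem_Icc (hg n) ω).1
        (hN.mem_Icc (hg n) ω).2)
    (ae_of_all _ fun ω => by simpa using ((hlim ω).const_sub (f ω)).abs)
  simpa using hdom

theorem indicator_iUnion_mem (hN : IsClosedSubstructure μ N)
    {s : ℕ → Set Ω} (hmeas : ∀ i, MeasurableSet (s i)) (hs : ∀ i, (s i).indicator 1 ∈ N) :
    (⋃ i, s i).indicator 1 ∈ N := by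
  have hacc : ∀ n, (accumulate s n).indicator 1 ∈ N := by
    intro n
    induction n with
    | zero => simpa using hs 0
    | succ n ih => simpa using hN.indicator_union_mem ih (hs (n + 1))
  refine hN.mem_of_tendsto (measurable_one.indicator (MeasurableSet.iUnion hmeas))
    (indicator_one_mem_Icc _) hacc fun ω => ?_
  rw [← iUnion_accumulate]
  refine (tendsto_indicator_const_apply_iff_eventually atTop (1 : ℝ) ω).2 ?_
  by_cases hω : ω ∈ ⋃ n, accumulate s n
  · obtain ⟨n, hn⟩ := mem_iUnion.1 hω
    filter_upwards [eventually_ge_atTop n] with m hm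
    exact iff_of_true (monotone_accumulate hm hn) hω
  · exact Eventually.of_forall fun m => iff_of_false (fun h => hω (mem_iUnion_of_mem m h)) hω

abbrev sigma (hN : IsClosedSubstructure μ N) : MeasurableSpace Ω where
  MeasurableSet' s := MeasurableSet s ∧ s.indicator 1 ∈ N
  measurableSet_empty := ⟨.empty, by simpa using hN.zero_mem⟩
  measurableSet_compl _ hs := ⟨hs.1.compl, hN.indicator_compl_mem hs.2⟩
  measurableSet_iUnion _ hs :=
    ⟨.iUnion fun i => (hs i).1, hN.indicator_iUnion_mem (fun i => (hs i).1) fun i => (hs i).2⟩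

theorem sigma_le (hN : IsClosedSubstructure μ N) : hN.sigma ≤ mΩ := fun _ hs => hs.1

theorem measurableSet_sigma_of_measure_zero (hN : IsClosedSubstructure μ N) {s : Set Ω}
    (hs : MeasurableSet s) (hμs : μ s = 0) : MeasurableSet[hN.sigma] s :=
  ⟨hs, hN.mem_of_ae_eq (measurable_one.indicator hs) (indicator_one_mem_Icc s) hN.zero_mem
    (indicator_meas_zero hμs)⟩

theorem mem_of_measurable_sigma (hN : IsClosedSubstructure μ N) (hg : Measurable[hN.sigma] g)
    (hgI : ∀ ω, g ω ∈ Icc (0 : ℝ) 1) : g ∈ N := by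
  classical
  have hfloor : ∀ n ω, ∑ i ∈ Finset.range (2 ^ n),
      (g ⁻¹' Ici ((i + 1) / 2 ^ n)).indicator 1 ω / 2 ^ n = ⌊g ω * 2 ^ n⌋₊ / (2 : ℝ) ^ n := by
    intro n ω
    rw [← Finset.sum_div, ← sum_range_ite_add_one_le_eq_floor (M := 2 ^ n)
      (mul_nonneg (hgI ω).1 (by positivity))
      (by push_cast; exact mul_le_of_le_one_left (by positivity) (hgI ω).2)]
    congr 1
    refine Finset.sum_congr rfl fun i _ => ?_
    simp only [Set.indicator_apply, mem_preimage, mem_Ici, Pi.one_apply,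
      div_le_iff₀ (by positivity : (0 : ℝ) < 2 ^ n)]
  have happrox : ∀ n, (fun ω => ⌊g ω * 2 ^ n⌋₊ / (2 : ℝ) ^ n) ∈ N := by
    intro n
    simp_rw [← hfloor]
    refine hN.sum_mem (fun i _ => hN.div_two_pow_mem (hg measurableSet_Ici).2 n) fun ω => ?_
    rw [hfloor, div_le_one (by positivity)]
    exact (Nat.floor_le (mul_nonneg (hgI ω).1 (by positivity))).trans
      (mul_le_of_le_one_left (by positivity) (hgI ω).2)
  exact hN.mem_of_tendsto (hg.mono hN.sigma_le le_rfl) hgI happrox fun ω =>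
    (tendsto_nat_floor_mul_div_atTop (hgI ω).1).comp
      (tendsto_pow_atTop_atTop_of_one_lt one_lt_two)

theorem const_mem (hN : IsClosedSubstructure μ N) {c : ℝ} (hc : c ∈ Icc (0 : ℝ) 1) :
    (fun _ => c) ∈ N :=
  hN.mem_of_measurable_sigma measurable_const fun _ => hc

theorem indicator_pos_mem (hN : IsClosedSubstructure μ N) (hf : f ∈ N) :
    (f ⁻¹' Ioi 0).indicator 1 ∈ N := by
  refine hN.mem_of_tendsto (measurable_one.indicator (hN.measurable hf measurableSet_Ioi))
    (indicator_one_mem_Icc _) (hN.min_two_pow_mul_mem hf) fun ω => ?_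
  rcases (hN.mem_Icc hf ω).1.lt_or_eq with hpos | hzero
  · have hlarge : Tendsto (fun n : ℕ => (2 : ℝ) ^ n * f ω) atTop atTop :=
      (tendsto_pow_atTop_atTop_of_one_lt one_lt_two).atTop_mul_const hpos
    rw [indicator_of_mem (show ω ∈ f ⁻¹' Ioi 0 from hpos)]
    refine tendsto_const_nhds.congr' ?_
    filter_upwards [hlarge.eventually_ge_atTop 1] with n hn
    exact (min_eq_right hn).symm
  · simp [← hzero]

theorem measurable_sigma_of_mem (hN : IsClosedSubstructure μ N) (hf : f ∈ N) :
    Measurable[hN.sigma] f := by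
  refine measurable_of_Ioi fun c => ?_
  rcases lt_or_ge c 0 with hc0 | hc0
  · convert @MeasurableSet.univ _ hN.sigma
    exact eq_univ_of_forall fun ω => hc0.trans_le (hN.mem_Icc hf ω).1
  rcases le_or_gt c 1 with hc1 | hc1
  · have hlevel : f ⁻¹' Ioi c = (fun ω => max (f ω - c) 0) ⁻¹' Ioi 0 := by
      ext ω; simp
    refine ⟨hN.measurable hf measurableSet_Ioi, ?_⟩
    rw [hlevel]
    exact hN.indicator_pos_mem (hN.tsub_mem _ _ hf (hN.const_mem ⟨hc0, hc1⟩))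
  · convert @MeasurableSet.empty _ hN.sigma
    exact eq_empty_of_forall_notMem fun ω h => (hN.mem_Icc hf ω).2.not_gt (hc1.trans h)

theorem eq_RVSet_sigma (hN : IsClosedSubstructure μ N) : N = RVSet mΩ μ hN.sigma := by
  ext f
  refine ⟨fun hf => ⟨hN.measurable hf, hN.mem_Icc hf, f, hN.measurable_sigma_of_mem hf, .rfl⟩, ?_⟩
  rintro ⟨hf, hfI, g, hg, hfg⟩
  have hclamp : (fun ω => max (min (g ω) 1) 0) ∈ N :=
    hN.mem_of_measurable_sigma ((hg.min measurable_const).max measurable_const)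
      fun ω => ⟨le_max_right _ _, max_le (min_le_right _ _) zero_le_one⟩
  refine hN.mem_of_ae_eq hf hfI hclamp (hfg.mono fun ω h => ?_)
  show f ω = max (min (g ω) 1) 0
  rw [← h, min_eq_left (hfI ω).2, max_eq_left (hfI ω).1]

theorem sigma_le_of_forall_ae_eq_measurable (hN : IsClosedSubstructure μ N)
    {G : MeasurableSpace Ω} (hG : G ≤ mΩ)
    (hnull : ∀ s, MeasurableSet[mΩ] s → μ s = 0 → MeasurableSet[G] s)
    (hrep : ∀ f ∈ N, ∃ g : Ω → ℝ, Measurable[G] g ∧ f =ᵐ[μ] g) : hN.sigma ≤ G := by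
  rintro s ⟨hs, hsN⟩
  obtain ⟨g, hg, hsg⟩ := hrep _ hsN
  refine measurableSet_of_ae_eq hG hnull hs (hg (measurableSet_singleton 1)) ?_
  filter_upwards [hsg] with ω h
  change (ω ∈ s) = (ω ∈ g ⁻¹' {1})
  rw [mem_preimage, mem_singleton_iff, ← h, Set.indicator_eq_one_iff_mem]

end IsClosedSubstructure

end ClosedSubstructure

/-- In `M = L¹(F, [0,1])`: for every sub-σ-algebra `F₁ ⊆ F`, the subset
`L¹(F₁, [0,1]) ⊆ M` contains `0`, is closed under the operations `¬`, `½`, `∸` and is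
closed in the `L¹` metric.  Conversely, every subset `N ⊆ M` containing `0`, closed under
`¬`, `½`, `∸` and closed in the `L¹` metric is of this form for a (smallest) sub-σ-algebra
`G = σ(N) ⊆ F` containing the `μ`-null sets of `F`. -/
theorem substructures_of_L1 {Ω : Type*} [F : MeasurableSpace Ω] (μ : Measure Ω)
    [IsProbabilityMeasure μ] :
    (∀ F₁ : MeasurableSpace Ω, F₁ ≤ F →
      ((fun _ => (0 : ℝ)) ∈ RVSet F μ F₁ ∧
       (∀ f ∈ RVSet F μ F₁, (fun ω => 1 - f ω) ∈ RVSet F μ F₁) ∧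
       (∀ f ∈ RVSet F μ F₁, (fun ω => f ω / 2) ∈ RVSet F μ F₁) ∧
       (∀ f g : Ω → ℝ, f ∈ RVSet F μ F₁ → g ∈ RVSet F μ F₁ →
         (fun ω => max (f ω - g ω) 0) ∈ RVSet F μ F₁) ∧
       (∀ f : Ω → ℝ, Measurable f → (∀ ω, f ω ∈ Icc (0 : ℝ) 1) →
         (∀ ε : ℝ, 0 < ε → ∃ g ∈ RVSet F μ F₁, ∫ ω, |f ω - g ω| ∂μ < ε) →
         f ∈ RVSet F μ F₁))) ∧
    (∀ N : Set (Ω → ℝ), N.Nonempty →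
      (∀ f ∈ N, Measurable f ∧ ∀ ω, f ω ∈ Icc (0 : ℝ) 1) →
      ((fun _ => (0 : ℝ)) ∈ N) →
      (∀ f ∈ N, (fun ω => 1 - f ω) ∈ N) →
      (∀ f ∈ N, (fun ω => f ω / 2) ∈ N) →
      (∀ f g : Ω → ℝ, f ∈ N → g ∈ N → (fun ω => max (f ω - g ω) 0) ∈ N) →
      (∀ f : Ω → ℝ, Measurable f → (∀ ω, f ω ∈ Icc (0 : ℝ) 1) →
        (∀ ε : ℝ, 0 < ε → ∃ g ∈ N, ∫ ω, |f ω - g ω| ∂μ < ε) → f ∈ N) →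
      ∃ G : MeasurableSpace Ω, G ≤ F ∧
        (∀ s : Set Ω, MeasurableSet[F] s → μ s = 0 → MeasurableSet[G] s) ∧
        N = RVSet F μ G ∧
        ∀ G' : MeasurableSpace Ω, G' ≤ F →
          (∀ s : Set Ω, MeasurableSet[F] s → μ s = 0 → MeasurableSet[G'] s) →
          (∀ f ∈ N, ∃ g : Ω → ℝ, Measurable[G'] g ∧ f =ᵐ[μ] g) → G ≤ G') := by
  refine ⟨fun F₁ hF₁ => ⟨const_mem_RVSet ⟨le_rfl, zero_le_one⟩, ?_, ?_, ?_, ?_⟩, ?_⟩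
  · exact fun f => RVSet.map_mem (ψ := fun x => 1 - x) (by fun_prop)
      fun x hx => ⟨by linarith [hx.2], by linarith [hx.1]⟩
  · exact fun f => RVSet.map_mem (ψ := fun x => x / 2) (by fun_prop)
      fun x hx => ⟨by linarith [hx.1], by linarith [hx.2]⟩
  · exact fun f g => RVSet.map₂_mem (φ := fun x y => max (x - y) 0) (by fun_prop)
      fun x hx y hy => ⟨le_max_right _ _, max_le (by linarith [hx.2, hy.1]) zero_le_one⟩
  -- `F₁` is the innermost instance here, so `Measurable f` means `F₁`-measurable
  · exact fun f hf hfI _ => mem_RVSet_of_measurable hF₁ hf hfI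
  · intro N _ hM h0 hneg hhalf htsub hclosed
    have hN : IsClosedSubstructure μ N := ⟨hM, h0, hneg, hhalf, htsub, hclosed⟩
    exact ⟨hN.sigma, hN.sigma_le, fun _ => hN.measurableSet_sigma_of_measure_zero,
      hN.eq_RVSet_sigma, fun _ => hN.sigma_le_of_forall_ae_eq_measurable⟩

end Stmt15
end

section
/- Let (Ω, F, μ) and (Ω', F', μ') be probability spaces, and let f̄ = (f₀,…,f_{ℓ−1}) ∈ L¹(F, [0,1])^ℓ and ḡ = (g₀,…,g_{ℓ−1}) ∈ L¹(F', [0,1])^ℓ. Then the following are equivalent: (i) for every term τ(x₀,…,x_{ℓ−1}) built from 0, ¬, ½, ∸, one has ∫ τ(f₀,…,f_{ℓ−1}) dμ = ∫ τ(g₀,…,g_{ℓ−1}) dμ' (where the operations are interpreted pointwise); (ii) f̄ and ḡ have the same joint distribution, i.e. the pushforward of μ under the map ω ↦ (f₀(ω),…,f_{ℓ−1}(ω)) ∈ [0,1]^ℓ equals the pushforward of μ' under ω ↦ (g₀(ω),…,g_{ℓ−1}(ω)). -/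
/-!
Both conditions only concern the laws `ν, ν'` of the tuples on the cube `[0,1]^ℓ`, and terms
evaluate to continuous functions, so (ii) ⇒ (i) is a change of variables. Conversely, `¬`, `½`
and `∸` generate truncated addition, `min` and all dyadic constants in `[0,1]`; hence the
indicator of each box `Iic c` is the pointwise limit on the cube of the terms
`minᵢ (1 - min (2ⁿ (xᵢ - qₙᵢ)⁺) 1)` with dyadic `qₙᵢ ↓ cᵢ`. Dominated convergence gives
`ν (Iic c) = ν' (Iic c)`, and boxes form a generating π-system.
-/

namespace Stmt16

open MeasureTheory Set

/-- Formal `L_RV`-terms in `ℓ` variables, built from the variables, the constant `0` and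
the operations `¬`, `½`, `∸`. -/
inductive RVTerm (ℓ : ℕ) : Type where
  | var : Fin ℓ → RVTerm ℓ
  | zero : RVTerm ℓ
  | neg : RVTerm ℓ → RVTerm ℓ
  | half : RVTerm ℓ → RVTerm ℓ
  | sub : RVTerm ℓ → RVTerm ℓ → RVTerm ℓ

/-- The standard (pointwise) interpretation of a term: `¬t = 1 - t`, `½t = t/2`,
`s ∸ t = max (s - t) 0`, constant `0`. -/
noncomputable def RVTerm.evalR {ℓ : ℕ} (v : Fin ℓ → ℝ) : RVTerm ℓ → ℝ
  | .var i => v i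
  | .zero => 0
  | .neg t => 1 - RVTerm.evalR v t
  | .half t => RVTerm.evalR v t / 2
  | .sub s t => max (RVTerm.evalR v s - RVTerm.evalR v t) 0


open Filter Topology

namespace RVTerm

variable {ℓ : ℕ}

theorem continuous_evalR (τ : RVTerm ℓ) : Continuous fun v : Fin ℓ → ℝ => evalR v τ := by
  induction τ with
  | var i => exact continuous_apply i
  | zero => exact continuous_const
  | neg t ih => exact continuous_const.sub ih
  | half t ih => exact ih.div_const 2
  | sub s t ihs iht => exact (ihs.sub iht).max continuous_const

theorem evalR_mem_Icc {v : Fin ℓ → ℝ} (hv : v ∈ Icc 0 1) (τ : RVTerm ℓ) :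
    evalR v τ ∈ Icc (0 : ℝ) 1 := by
  induction τ with
  | var i => exact ⟨hv.1 i, hv.2 i⟩
  | zero => simp [evalR]
  | neg t ih => simp only [evalR, mem_Icc] at ih ⊢; constructor <;> linarith
  | half t ih => simp only [evalR, mem_Icc] at ih ⊢; constructor <;> linarith
  | sub s t ihs iht =>
    simp only [evalR, mem_Icc] at ihs iht ⊢
    exact ⟨le_max_right _ _, max_le (by linarith) zero_le_one⟩

def one : RVTerm ℓ := neg zero

def add (s t : RVTerm ℓ) : RVTerm ℓ := neg (sub (neg s) t)

def inf (s t : RVTerm ℓ) : RVTerm ℓ := sub s (sub s t)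

def scale (n : ℕ) : RVTerm ℓ → RVTerm ℓ := (fun t => add t t)^[n]

def dyadic (k m : ℕ) : RVTerm ℓ := (fun t => add t (half^[m] one))^[k] zero

section Eval

variable (v : Fin ℓ → ℝ)

@[simp] theorem evalR_one : evalR v (one : RVTerm ℓ) = 1 := by simp [one, evalR]

theorem evalR_add (s t : RVTerm ℓ) :
    evalR v (add s t) = min (evalR v s + evalR v t) 1 := by
  simp only [add, evalR]
  rw [← min_sub_sub_left, sub_zero, sub_sub, sub_sub_cancel]

theorem evalR_inf (s t : RVTerm ℓ) :
    evalR v (inf s t) = max (min (evalR v s) (evalR v t)) 0 := by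
  simp only [inf, evalR]
  rcases le_total (evalR v s) (evalR v t) with h | h
  · rw [max_eq_right (sub_nonpos.2 h), sub_zero, min_eq_left h]
  · rw [max_eq_left (sub_nonneg.2 h), sub_sub_cancel, min_eq_right h]

theorem evalR_iterate_half (m : ℕ) (t : RVTerm ℓ) :
    evalR v (half^[m] t) = evalR v t / 2 ^ m := by
  induction m with
  | zero => simp
  | succ m ih => rw [Function.iterate_succ_apply', evalR, ih, pow_succ, div_div]

theorem evalR_scale {t : RVTerm ℓ} (ht : evalR v t ≤ 1) (n : ℕ) :
    evalR v (scale n t) = min (2 ^ n * evalR v t) 1 := by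
  induction n with
  | zero => simpa [scale] using ht
  | succ n ih =>
    rw [scale, Function.iterate_succ_apply', ← scale, evalR_add, ih, ← two_mul,
      mul_min_of_nonneg _ _ zero_le_two, mul_one, min_assoc, min_eq_right one_le_two, pow_succ',
      mul_assoc]

theorem evalR_dyadic (k m : ℕ) :
    evalR v (dyadic k m : RVTerm ℓ) = min ((k : ℝ) / 2 ^ m) 1 := by
  induction k with
  | zero => simp [dyadic, evalR]
  | succ k ih =>
    rw [dyadic, Function.iterate_succ_apply', ← dyadic, evalR_add, ih, evalR_iterate_half,
      evalR_one, ← min_add_add_right, min_assoc,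
      min_eq_right (le_add_of_nonneg_right (by positivity)), Nat.cast_succ, add_div]

theorem evalR_foldr_inf {ι : Type*} (T : ι → RVTerm ℓ) (p : ι → Prop) [DecidablePred p]
    (hT : ∀ i, evalR v (T i) = if p i then 1 else 0) (l : List ι) :
    evalR v (l.foldr (fun i t => inf (T i) t) one) = if ∀ i ∈ l, p i then 1 else 0 := by
  induction l with
  | nil => simp
  | cons i l ih =>
    rw [List.foldr_cons, evalR_inf, hT, ih]
    simp only [List.forall_mem_cons]
    split_ifs <;> simp_all

end Eval

/-- For `c ≥ 0` this evaluates to `1 - min (2ⁿ (xᵢ - qₙ)⁺) 1`, where `qₙ = min (⌈2ⁿc⌉₊ / 2ⁿ) 1`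
is a dyadic upper approximation of `c`. -/
noncomputable def leApprox (i : Fin ℓ) (c : ℝ) (n : ℕ) : RVTerm ℓ :=
  if c < 0 then zero else neg (scale n (sub (var i) (dyadic ⌈c * 2 ^ n⌉₊ n)))

theorem eventually_evalR_leApprox {v : Fin ℓ → ℝ} (hv : v ∈ Icc 0 1) (i : Fin ℓ) (c : ℝ) :
    ∀ᶠ n in atTop, evalR v (leApprox i c n) = if v i ≤ c then 1 else 0 := by
  rcases lt_or_ge c 0 with hc | hc
  · have hvc : ¬ v i ≤ c := fun h => (hv.1 i).not_gt (h.trans_lt hc)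
    simp [leApprox, hc, hvc, evalR]
  set q : ℕ → ℝ := fun n => min (⌈c * 2 ^ n⌉₊ / 2 ^ n) 1
  have hval : ∀ n, evalR v (leApprox i c n) = 1 - min (2 ^ n * max (v i - q n) 0) 1 := by
    intro n
    have hq : (0 : ℝ) ≤ min ((⌈c * 2 ^ n⌉₊ : ℝ) / 2 ^ n) 1 := le_min (by positivity) zero_le_one
    rw [leApprox, if_neg hc.not_gt, evalR, evalR_scale] <;> simp only [evalR, evalR_dyadic, q]
    exact max_le ((sub_le_self _ hq).trans (hv.2 i)) zero_le_one
  split_ifs with hvc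
  · refine Eventually.of_forall fun n => ?_
    have hvq : v i ≤ q n :=
      le_min (hvc.trans ((le_div_iff₀ (by positivity)).2 (Nat.le_ceil _))) (hv.2 i)
    rw [hval, max_eq_right (sub_nonpos.2 hvq), mul_zero, min_eq_left zero_le_one, sub_zero]
  · -- `qₙ < c + 2⁻ⁿ`, so `2ⁿ (xᵢ - qₙ) > 2ⁿ (xᵢ - c) - 1` eventually exceeds `1`.
    obtain ⟨N, hN⟩ := pow_unbounded_of_one_lt (2 / (v i - c)) one_lt_two
    rw [div_lt_iff₀ (sub_pos.2 (not_le.1 hvc))] at hN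
    filter_upwards [eventually_ge_atTop N] with n hn
    have hceil := Nat.ceil_lt_add_one (mul_nonneg hc (pow_nonneg zero_le_two n))
    have hpow : (2 : ℝ) ^ N ≤ 2 ^ n := pow_le_pow_right₀ one_le_two hn
    have hlarge : 1 ≤ 2 ^ n * (v i - ⌈c * 2 ^ n⌉₊ / 2 ^ n) := by
      rw [mul_sub, mul_div_cancel₀ _ (by positivity)]
      nlinarith [sub_pos.2 (not_le.1 hvc)]
    have hq : v i - ⌈c * 2 ^ n⌉₊ / 2 ^ n ≤ max (v i - q n) 0 :=
      le_max_of_le_left (sub_le_sub_left (min_le_left _ _) _)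
    rw [hval, min_eq_right (hlarge.trans (by gcongr)), sub_self]

noncomputable def boxApprox (c : Fin ℓ → ℝ) (n : ℕ) : RVTerm ℓ :=
  (List.finRange ℓ).foldr (fun i t => inf (leApprox i (c i) n) t) one

theorem eventually_evalR_boxApprox {v : Fin ℓ → ℝ} (hv : v ∈ Icc 0 1) (c : Fin ℓ → ℝ) :
    ∀ᶠ n in atTop, evalR v (boxApprox c n) = (Iic c).indicator 1 v := by
  filter_upwards [eventually_all.2 fun i => eventually_evalR_leApprox hv i (c i)] with n hn
  rw [boxApprox, evalR_foldr_inf v _ (fun i => v i ≤ c i) hn]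
  by_cases hvc : v ≤ c <;> simp [hvc, Pi.le_def.symm]

theorem tendsto_integral_boxApprox {ν : Measure (Fin ℓ → ℝ)} [IsFiniteMeasure ν]
    (hν : ∀ᵐ v ∂ν, v ∈ Icc 0 1) (c : Fin ℓ → ℝ) :
    Tendsto (fun n => ∫ v, evalR v (boxApprox c n) ∂ν) atTop (𝓝 (ν.real (Iic c))) := by
  rw [← integral_indicator_one measurableSet_Iic]
  refine tendsto_integral_of_dominated_convergence (fun _ => 1)
    (fun n => (continuous_evalR _).aestronglyMeasurable) (integrable_const 1)
    (fun n => hν.mono fun v hv => ?_)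
    (hν.mono fun v hv => tendsto_const_nhds.congr'
      ((eventually_evalR_boxApprox hv c).mono fun _ h => h.symm))
  obtain ⟨h0, h1⟩ := evalR_mem_Icc hv (boxApprox c n)
  rwa [Real.norm_of_nonneg h0]

end RVTerm

theorem ext_of_Iic_pi {ι : Type*} [Finite ι] {ν ν' : Measure (ι → ℝ)} [IsFiniteMeasure ν]
    (huniv : ν univ = ν' univ) (h : ∀ c, ν (Iic c) = ν' (Iic c)) : ν = ν' := by
  have hgen : ∀ _ : ι, MeasurableSpace.generateFrom (range (Iic : ℝ → Set ℝ)) = borel ℝ :=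
    fun _ => (borel_eq_generateFrom_Iic ℝ).symm
  have hspan : IsCountablySpanning (range (Iic : ℝ → Set ℝ)) :=
    ⟨fun n : ℕ => Iic (n : ℝ), fun n => mem_range_self _,
      iUnion_eq_univ_iff.2 fun x => ⟨⌈x⌉₊, Nat.le_ceil x⟩⟩
  refine ext_of_generate_finite _ (generateFrom_eq_pi hgen fun _ => hspan).symm
    (IsPiSystem.pi fun _ => isPiSystem_Iic) ?_ huniv
  rintro _ ⟨t, ht, rfl⟩
  choose c hc using mem_univ_pi.1 ht
  obtain rfl : t = fun i => Iic (c i) := funext fun i => (hc i).symm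
  rw [pi_univ_Iic]
  exact h c

theorem eq_of_integral_evalR_eq {ℓ : ℕ} {ν ν' : Measure (Fin ℓ → ℝ)} [IsFiniteMeasure ν]
    [IsFiniteMeasure ν'] (hν : ∀ᵐ v ∂ν, v ∈ Icc 0 1) (hν' : ∀ᵐ v ∂ν', v ∈ Icc 0 1)
    (h : ∀ τ : RVTerm ℓ, ∫ v, RVTerm.evalR v τ ∂ν = ∫ v, RVTerm.evalR v τ ∂ν') : ν = ν' := by
  have huniv : ν.real univ = ν'.real univ := by simpa using h RVTerm.one
  refine ext_of_Iic_pi ((measureReal_eq_measureReal_iff).1 huniv) fun c =>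
    (measureReal_eq_measureReal_iff).1 <|
      tendsto_nhds_unique ?_ (RVTerm.tendsto_integral_boxApprox hν' c)
  simpa only [h] using RVTerm.tendsto_integral_boxApprox hν c

section JointLaw

variable {Ω : Type*} [MeasurableSpace Ω] {ℓ : ℕ} {f : Fin ℓ → Ω → ℝ}

theorem integral_evalR_comp (μ : Measure Ω) (hf : ∀ i, Measurable (f i)) (τ : RVTerm ℓ) :
    ∫ ω, RVTerm.evalR (fun i => f i ω) τ ∂μ = ∫ v, RVTerm.evalR v τ ∂(μ.map fun ω i => f i ω) :=
  (integral_map (measurable_pi_lambda _ hf).aemeasurable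
    (RVTerm.continuous_evalR τ).aestronglyMeasurable).symm

theorem ae_map_mem_Icc (μ : Measure Ω) (hf : ∀ i, Measurable (f i))
    (hf01 : ∀ i ω, f i ω ∈ Icc (0 : ℝ) 1) : ∀ᵐ v ∂(μ.map fun ω i => f i ω), v ∈ Icc 0 1 :=
  (ae_map_iff (measurable_pi_lambda _ hf).aemeasurable measurableSet_Icc).2 <|
    ae_of_all _ fun ω => ⟨fun i => (hf01 i ω).1, fun i => (hf01 i ω).2⟩

end JointLaw

/-- Two tuples of `[0,1]`-valued random variables have the same quantifier-free
`L_RV`-type (the expectations of all terms agree) if and only if they have the same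
joint distribution. -/
theorem qf_type_iff_joint_distribution {Ω Ω' : Type*}
    [MeasurableSpace Ω] [MeasurableSpace Ω'] (μ : Measure Ω) (μ' : Measure Ω')
    [IsProbabilityMeasure μ] [IsProbabilityMeasure μ'] {ℓ : ℕ}
    (f : Fin ℓ → Ω → ℝ) (g : Fin ℓ → Ω' → ℝ)
    (hf : ∀ i, Measurable (f i)) (hf01 : ∀ i ω, f i ω ∈ Icc (0 : ℝ) 1)
    (hg : ∀ i, Measurable (g i)) (hg01 : ∀ i ω, g i ω ∈ Icc (0 : ℝ) 1) :
    (∀ τ : RVTerm ℓ,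
      ∫ ω, RVTerm.evalR (fun i => f i ω) τ ∂μ = ∫ ω, RVTerm.evalR (fun i => g i ω) τ ∂μ') ↔
    μ.map (fun ω i => f i ω) = μ'.map (fun ω i => g i ω) := by
  simp only [integral_evalR_comp μ hf, integral_evalR_comp μ' hg]
  exact ⟨eq_of_integral_evalR_eq (ae_map_mem_Icc μ hf hf01) (ae_map_mem_Icc μ' hg hg01),
    fun h τ => by rw [h]⟩

end Stmt16
end

section
/- Let (Ω, F, μ) be an atomless probability space, let S be a finite set, and for each x ∈ S let w_x ≥ 0 be a real number (a weight) and C_x ∈ F an event. For T ⊆ S write W_T = Σ_{x∈T} w_x and C_T = ⋃_{x∈T} C_x. Then the following are equivalent: (1) for every T ⊆ S, μ(C_T) ≥ W_T; (2) there exists a family {D_x}_{x∈S} of pairwise (a.e.) disjoint events with D_x ⊆ C_x and μ(D_x) = w_x for each x ∈ S. Moreover, if W_S = 1 then the D_x form a partition of Ω up to null measure. -/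
/-!
Cut `Ω` into the atoms of the finite algebra generated by the `C x`: `atom C B` is where exactly
the `C x` with `x ∈ B` occur. Hall's condition for the events is then Hall's condition for a
finite supply–demand problem: demands `w x`, supplies `μ (atom C B)`, and `x` may draw from `B`
when `x ∈ B`. By Gale's supply–demand theorem there is a fractional transport `d`, and since `μ`
is atomless each atom can be cut into disjoint pieces of measures `d x B`; `D x` is the union of
the pieces of `x`. The converse and the partition statement are additivity of `μ`.

Gale's theorem goes by induction on the number of demands plus the number of positive supplies.
Move an amount `ε` from a demand `x₀` to an adjacent supply `B₀`, as much as Hall's condition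
allows: then `x₀` or `B₀` is exhausted, or some set `T ∌ x₀` of demands becomes tight, i.e. needs
all the supply adjacent to it; a tight set splits the problem into `T` with that supply and the
remaining demands with the remaining supply.
-/

namespace Stmt18

section SupplyDemand

open Finset

variable {ι κ : Type*}

structure IsTransport (N : ι → Finset κ) (S : Finset ι) (w : ι → ℝ) (s : κ → ℝ)
    (d : ι → κ → ℝ) : Prop where
  nonneg : ∀ x B, 0 ≤ d x B
  sum_row : ∀ x ∈ S, ∑ B ∈ N x, d x B = w x
  sum_col_le : ∀ B, ∑ x ∈ S, d x B ≤ s B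

def HallCondition [DecidableEq κ] (N : ι → Finset κ) (S : Finset ι) (w : ι → ℝ)
    (s : κ → ℝ) : Prop :=
  ∀ T ⊆ S, ∑ x ∈ T, w x ≤ ∑ B ∈ T.biUnion N, s B

variable {N : ι → Finset κ} {S T : Finset ι} {w : ι → ℝ} {s : κ → ℝ}

lemma sum_sub_single [DecidableEq ι] (f : ι → ℝ) (a : ι) (ε : ℝ) :
    ∑ x ∈ T, (f - Pi.single a ε : ι → ℝ) x = ∑ x ∈ T, f x - if a ∈ T then ε else 0 := by
  simp only [Pi.sub_apply, sum_sub_distrib, sum_pi_single']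

lemma sub_single_apply_nonneg [DecidableEq ι] {f : ι → ℝ} {a b : ι} {ε : ℝ} (hb : 0 ≤ f b)
    (hε : ε ≤ f a) : 0 ≤ (f - Pi.single a ε : ι → ℝ) b := by
  rcases eq_or_ne b a with rfl | hba <;> simp [*]

lemma sub_single_apply_le [DecidableEq ι] {f : ι → ℝ} {a b : ι} {ε : ℝ} (hε : 0 ≤ ε) :
    (f - Pi.single a ε : ι → ℝ) b ≤ f b := by
  rcases eq_or_ne b a with rfl | hba <;> simp [*]

namespace IsTransport

lemma zero (hw : ∀ x ∈ S, w x = 0) (hs : ∀ B, 0 ≤ s B) : IsTransport N S w s 0 :=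
  ⟨fun _ _ => le_rfl, fun x hx => by simp [hw x hx], fun B => by simpa using hs B⟩

variable [DecidableEq ι]

lemma piecewise {s₁ s₂ : κ → ℝ} {d₁ d₂ : ι → κ → ℝ} (hT : T ⊆ S)
    (h₁ : IsTransport N T w s₁ d₁) (h₂ : IsTransport N (S \ T) w s₂ d₂)
    (hs : ∀ B, s₁ B + s₂ B ≤ s B) : IsTransport N S w s (T.piecewise d₁ d₂) where
  nonneg x B := by
    by_cases hx : x ∈ T
    · simpa [hx] using h₁.nonneg x B
    · simpa [hx] using h₂.nonneg x B
  sum_row x hx := by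
    by_cases hxT : x ∈ T
    · simpa [hxT] using h₁.sum_row x hxT
    · simpa [hxT] using h₂.sum_row x (mem_sdiff.mpr ⟨hx, hxT⟩)
  sum_col_le B := by
    have h := sum_piecewise S T (fun x => d₁ x B) (fun x => d₂ x B)
    rw [Finset.inter_eq_right.mpr hT] at h
    have h₁' := h₁.sum_col_le B
    have h₂' := h₂.sum_col_le B
    have := hs B
    simp only [Finset.piecewise, ite_apply] at h ⊢
    linarith

lemma of_erase {d : ι → κ → ℝ} {x₀ : ι} (hx₀ : x₀ ∈ S) (hw₀ : w x₀ = 0)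
    (h : IsTransport N (S.erase x₀) w s d) : IsTransport N S w s ((S.erase x₀).piecewise d 0) :=
  h.piecewise (erase_subset _ _) (.zero (by simpa [sdiff_erase_self hx₀]) fun _ => le_rfl)
    (by simp)

lemma add_single [DecidableEq κ] {d : ι → κ → ℝ} {x₀ : ι} {B₀ : κ} {ε : ℝ}
    (h : IsTransport N S (w - Pi.single x₀ ε) (s - Pi.single B₀ ε) d) (hε : 0 ≤ ε)
    (hB₀ : B₀ ∈ N x₀) :
    IsTransport N S w s fun x B => d x B + if x = x₀ ∧ B = B₀ then ε else 0 where
  nonneg x B := add_nonneg (h.nonneg x B) (by split_ifs <;> simp [hε])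
  sum_row x hx := by
    have := h.sum_row x hx
    rcases eq_or_ne x x₀ with rfl | hx₀ <;> simp_all [sum_add_distrib]
  sum_col_le B := by
    have := h.sum_col_le B
    rcases eq_or_ne B B₀ with rfl | hB <;> simp_all [sum_add_distrib]
    split_ifs <;> linarith

end IsTransport

namespace HallCondition

variable [DecidableEq κ]

lemma mono (h : HallCondition N S w s) (hT : T ⊆ S) : HallCondition N T w s :=
  fun R hR => h R (hR.trans hT)

lemma le_sum_of_mem {x : ι} (h : HallCondition N S w s) (hx : x ∈ S) :
    w x ≤ ∑ B ∈ N x, s B := by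
  simpa using h {x} (singleton_subset_iff.mpr hx)

lemma piecewise_biUnion (h : HallCondition N S w s) (hT : T ⊆ S) :
    HallCondition N T w ((T.biUnion N).piecewise s 0) := fun R hR => by
  refine (h R (hR.trans hT)).trans_eq (sum_congr rfl fun B hB => ?_)
  rw [piecewise_eq_of_mem _ _ _ (biUnion_subset_biUnion_of_subset_left N hR hB)]

lemma sdiff_of_tight [DecidableEq ι] (h : HallCondition N S w s) (hT : T ⊆ S)
    (htight : ∑ B ∈ T.biUnion N, s B ≤ ∑ x ∈ T, w x) :
    HallCondition N (S \ T) w ((T.biUnion N).piecewise 0 s) := fun R hR => by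
  have hRT : Disjoint R T := disjoint_of_subset_left hR disjoint_sdiff_self_left
  have hRT_hall := h (R ∪ T) (union_subset (hR.trans sdiff_subset) hT)
  rw [sum_union hRT, union_biUnion, ← sum_sdiff (subset_union_right (s₁ := R.biUnion N)),
    union_sdiff_right] at hRT_hall
  rw [sum_piecewise, Pi.zero_def, sum_const_zero, zero_add]
  linarith

lemma sub_single [DecidableEq ι] {x₀ : ι} {B₀ : κ} {ε : ℝ} (h : HallCondition N S w s)
    (hB₀ : B₀ ∈ N x₀) (hslack : ∀ T ⊆ S.erase x₀, B₀ ∈ T.biUnion N →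
      ε + ∑ x ∈ T, w x ≤ ∑ B ∈ T.biUnion N, s B) :
    HallCondition N S (w - Pi.single x₀ ε) (s - Pi.single B₀ ε) := fun T hT => by
  rw [sum_sub_single, sum_sub_single]
  by_cases hx₀ : x₀ ∈ T
  · have hB₀T : B₀ ∈ T.biUnion N := mem_biUnion.mpr ⟨x₀, hx₀, hB₀⟩
    simp only [hx₀, hB₀T, if_true]
    linarith [h T hT]
  · by_cases hB₀T : B₀ ∈ T.biUnion N
    · simp only [hx₀, hB₀T, if_true, if_false]
      linarith [hslack T (subset_erase.mpr ⟨hT, hx₀⟩) hB₀T]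
    · simpa only [hx₀, hB₀T, if_false, sub_zero] using h T hT

lemma exists_reduction [DecidableEq ι] {x₀ : ι} {B₀ : κ} (h : HallCondition N S w s)
    (hB₀ : B₀ ∈ N x₀) (hw₀ : 0 ≤ w x₀) (hs₀ : 0 ≤ s B₀) :
    ∃ ε, 0 ≤ ε ∧ ε ≤ w x₀ ∧ ε ≤ s B₀ ∧
      HallCondition N S (w - Pi.single x₀ ε) (s - Pi.single B₀ ε) ∧
      (ε = w x₀ ∨ ε = s B₀ ∨ ∃ T ⊆ S.erase x₀, T.Nonempty ∧
        ∑ B ∈ T.biUnion N, (s - Pi.single B₀ ε : κ → ℝ) B ≤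
          ∑ x ∈ T, (w - Pi.single x₀ ε : ι → ℝ) x) := by
  -- Moving `ε` can only break the Hall inequalities of the sets `T ∌ x₀` adjacent to `B₀`.
  set slack := fun T : Finset ι => ∑ B ∈ T.biUnion N, s B - ∑ x ∈ T, w x
  set V := insert (w x₀) (insert (s B₀)
    ({T ∈ (S.erase x₀).powerset | B₀ ∈ T.biUnion N}.image slack))
  have hV : V.Nonempty := insert_nonempty _ _
  have hslack : ∀ T ⊆ S.erase x₀, B₀ ∈ T.biUnion N → V.min' hV ≤ slack T :=
    fun T hT hB => min'_le _ _ <| by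
      simp only [V, mem_insert, mem_image, mem_filter, mem_powerset]; tauto
  refine ⟨V.min' hV, le_min' _ _ _ ?_, min'_le _ _ (by simp [V]), min'_le _ _ (by simp [V]),
    h.sub_single hB₀ fun T hT hB => by linarith [hslack T hT hB], ?_⟩
  · simp only [V, mem_insert, mem_image, mem_filter, mem_powerset]
    rintro _ (rfl | rfl | ⟨T, ⟨hT, -⟩, rfl⟩)
    exacts [hw₀, hs₀, sub_nonneg.mpr (h T (hT.trans (erase_subset _ _)))]
  · have hmem := min'_mem V hV
    simp only [V, mem_insert, mem_image, mem_filter, mem_powerset] at hmem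
    rcases hmem with hmem | hmem | ⟨T, ⟨hT, hB₀T⟩, hTε⟩
    · exact .inl hmem
    · exact .inr (.inl hmem)
    refine .inr (.inr ⟨T, hT, ?_, ?_⟩)
    · obtain ⟨x, hx, -⟩ := mem_biUnion.mp hB₀T
      exact ⟨x, hx⟩
    · have hx₀T : x₀ ∉ T := fun hx₀ => (notMem_erase x₀ S) (hT hx₀)
      rw [sum_sub_single, sum_sub_single, if_pos hB₀T, if_neg hx₀T]
      linarith

lemma exists_isTransport_of_tight [DecidableEq ι] (h : HallCondition N S w s)
    (hs : ∀ B, 0 ≤ s B) (hT : T ⊂ S) (hTne : T.Nonempty)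
    (htight : ∑ B ∈ T.biUnion N, s B ≤ ∑ x ∈ T, w x)
    (solve : ∀ ⦃S' : Finset ι⦄ ⦃s' : κ → ℝ⦄, S' ⊂ S → (∀ B, 0 ≤ s' B) → (∀ B, s' B ≤ s B) →
      HallCondition N S' w s' → ∃ d, IsTransport N S' w s' d) :
    ∃ d, IsTransport N S w s d := by
  set U := T.biUnion N
  have hU (B : κ) : 0 ≤ U.piecewise s (0 : κ → ℝ) B ∧ 0 ≤ U.piecewise (0 : κ → ℝ) s B ∧
      U.piecewise s (0 : κ → ℝ) B + U.piecewise (0 : κ → ℝ) s B = s B := by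
    by_cases hB : B ∈ U <;> simp [hB, hs]
  obtain ⟨d₁, hd₁⟩ := solve hT (fun B => (hU B).1) (fun B => by linarith [hU B])
    (h.piecewise_biUnion hT.subset)
  obtain ⟨d₂, hd₂⟩ := solve (sdiff_ssubset hT.subset hTne) (fun B => (hU B).2.1)
    (fun B => by linarith [hU B]) (h.sdiff_of_tight hT.subset htight)
  exact ⟨_, hd₁.piecewise hT.subset hd₂ fun B => (hU B).2.2.le⟩

end HallCondition

lemma card_filter_pos_le [Fintype κ] {f g : κ → ℝ} (h : ∀ B, f B ≤ g B) :
    #{B | 0 < f B} ≤ #{B | 0 < g B} :=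
  card_le_card (monotone_filter_right _ fun B _ hB => hB.trans_le (h B))

lemma card_filter_pos_lt [Fintype κ] {f g : κ → ℝ} {B₀ : κ} (h : ∀ B, f B ≤ g B)
    (hf : f B₀ ≤ 0) (hg : 0 < g B₀) : #{B | 0 < f B} < #{B | 0 < g B} :=
  card_lt_card <| (ssubset_iff_of_subset <|
    monotone_filter_right _ fun B _ hB => hB.trans_le (h B)).mpr
      ⟨B₀, by simpa using hg, by simpa using hf⟩

theorem exists_isTransport_of_hallCondition [DecidableEq ι] [DecidableEq κ] [Fintype κ]
    (hw : ∀ x ∈ S, 0 ≤ w x) (hs : ∀ B, 0 ≤ s B) (h : HallCondition N S w s) :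
    ∃ d, IsTransport N S w s d := by
  induction hn : #S + #{B | 0 < s B} using Nat.strong_induction_on generalizing S w s with
  | _ n ih =>
  subst hn
  have solve : ∀ ⦃S' : Finset ι⦄ ⦃w' : ι → ℝ⦄ ⦃s' : κ → ℝ⦄, S' ⊂ S → (∀ x ∈ S', 0 ≤ w' x) →
      (∀ B, 0 ≤ s' B) → (∀ B, s' B ≤ s B) → HallCondition N S' w' s' →
      ∃ d, IsTransport N S' w' s' d := fun S' w' s' hS' hw' hs' hs's h' =>
    ih _ (by have := card_lt_card hS'; have := card_filter_pos_le hs's; omega) hw' hs' h' rfl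
  obtain rfl | ⟨x₀, hx₀⟩ := S.eq_empty_or_nonempty
  · exact ⟨0, .zero (by simp) hs⟩
  have solve_erase : ∀ ⦃w' : ι → ℝ⦄ ⦃s' : κ → ℝ⦄, (∀ x ∈ S, 0 ≤ w' x) → (∀ B, 0 ≤ s' B) →
      (∀ B, s' B ≤ s B) → HallCondition N S w' s' → w' x₀ = 0 →
      ∃ d, IsTransport N S w' s' d := fun w' s' hw' hs' hs's h' hw₀ =>
    let ⟨_, hd⟩ := solve (erase_ssubset hx₀) (fun x hx => hw' x (mem_of_mem_erase hx)) hs' hs's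
      (h'.mono (erase_subset _ _))
    ⟨_, hd.of_erase hx₀ hw₀⟩
  by_cases hB₀ : ∃ B₀ ∈ N x₀, 0 < s B₀
  swap
  · push Not at hB₀
    exact solve_erase hw hs (fun _ => le_rfl) h
      (le_antisymm ((h.le_sum_of_mem hx₀).trans (sum_nonpos hB₀)) (hw x₀ hx₀))
  obtain ⟨B₀, hB₀, hsB₀⟩ := hB₀
  obtain ⟨ε, hε, hεw, hεs, h', hprogress⟩ := h.exists_reduction hB₀ (hw x₀ hx₀) hsB₀.le
  set w' := w - Pi.single x₀ ε
  set s' := s - Pi.single B₀ ε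
  have hw' : ∀ x ∈ S, 0 ≤ w' x := fun x hx => sub_single_apply_nonneg (hw x hx) hεw
  have hs' : ∀ B, 0 ≤ s' B := fun B => sub_single_apply_nonneg (hs B) hεs
  have hs's : ∀ B, s' B ≤ s B := fun _ => sub_single_apply_le hε
  suffices ∃ d, IsTransport N S w' s' d from
    let ⟨_, hd⟩ := this; ⟨_, hd.add_single hε hB₀⟩
  rcases hprogress with hεw | hεs | ⟨T, hT, hTne, htight⟩
  · exact solve_erase hw' hs' hs's h' (by simp [w', hεw])
  · have := card_filter_pos_lt hs's (by simp [s', hεs]) hsB₀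
    exact ih _ (by omega) hw' hs' h' rfl
  · exact h'.exists_isTransport_of_tight hs' (hT.trans_ssubset (erase_ssubset hx₀)) hTne htight
      fun _ _ hS' h0 hle hS'_hall => solve hS' (fun x hx => hw' x (hS'.subset hx)) h0
        (fun B => (hle B).trans (hs's B)) hS'_hall

end SupplyDemand

open MeasureTheory Set Function

section Atomless

variable {Ω : Type*} [MeasurableSpace Ω]

-- By Sierpiński's theorem this intermediate-value form is equivalent to having no atoms.
def Atomless (μ : Measure Ω) : Prop :=
  ∀ s : Set Ω, MeasurableSet s → ∀ r : ENNReal, r ≤ μ s →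
    ∃ t : Set Ω, t ⊆ s ∧ MeasurableSet t ∧ μ t = r

theorem Atomless.exists_pairwiseDisjoint_subsets {μ : Measure Ω} [IsFiniteMeasure μ]
    (hμ : Atomless μ) {ι : Type*} [DecidableEq ι] (a : ι → ENNReal) (F : Finset ι) {A : Set Ω}
    (hA : MeasurableSet A) (ha : ∑ x ∈ F, a x ≤ μ A) :
    ∃ E : ι → Set Ω, (∀ x ∈ F, MeasurableSet (E x) ∧ E x ⊆ A ∧ μ (E x) = a x) ∧
      (F : Set ι).PairwiseDisjoint E := by
  induction F using Finset.induction_on generalizing A with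
  | empty => exact ⟨fun _ => ∅, by simp, by simp⟩
  | insert x₀ F hx₀ ih =>
    rw [Finset.sum_insert hx₀] at ha
    obtain ⟨E₀, hE₀A, hE₀, hμE₀⟩ := hμ A hA (a x₀) (le_trans le_self_add ha)
    have hrest : ∑ x ∈ F, a x ≤ μ (A \ E₀) := by
      rw [measure_sdiff hE₀A hE₀.nullMeasurableSet (measure_ne_top μ _), hμE₀]
      exact ENNReal.le_sub_of_add_le_left (hμE₀ ▸ measure_ne_top μ E₀) ha
    obtain ⟨E, hE, hEd⟩ := ih (hA.diff hE₀) hrest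
    have hEF : ∀ x ∈ F, Function.update E x₀ E₀ x = E x := fun x hx =>
      Function.update_of_ne (ne_of_mem_of_not_mem hx hx₀) _ _
    refine ⟨Function.update E x₀ E₀, fun x hx => ?_, ?_⟩
    · rcases Finset.mem_insert.mp hx with rfl | hx
      · simpa using ⟨hE₀, hE₀A, hμE₀⟩
      · obtain ⟨hEm, hEA, hEμ⟩ := hE x hx
        exact hEF x hx ▸ ⟨hEm, hEA.trans sdiff_subset, hEμ⟩
    · rw [Finset.coe_insert]
      refine (hEd.mono_on fun x hx => (hEF x hx).le).insert fun x hx _ => ?_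
      rw [Function.update_self, hEF x hx]
      exact disjoint_sdiff_right.mono_right (hE x hx).2.1

end Atomless

section Atoms

variable {Ω ι : Type*} {C : ι → Set Ω}

def atom (C : ι → Set Ω) (B : Finset ι) : Set Ω := {ω | ∀ x, x ∈ B ↔ ω ∈ C x}

lemma atom_subset {B : Finset ι} {x : ι} (hx : x ∈ B) : atom C B ⊆ C x :=
  fun _ hω => (hω x).mp hx

lemma pairwise_disjoint_atom : Pairwise (Disjoint on atom C) := fun _ _ hne =>
  disjoint_left.mpr fun _ hω hω' => hne (Finset.ext fun x => (hω x).trans (hω' x).symm)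

lemma measurableSet_atom [MeasurableSpace Ω] [Countable ι] (hC : ∀ x, MeasurableSet (C x))
    (B : Finset ι) : MeasurableSet (atom C B) := by
  simp only [atom, ofPred_forall]
  exact .iInter fun x => measurableSet_setOfPred.mpr (measurable_const.iff (hC x).mem)

variable [Fintype ι] [DecidableEq ι]

lemma biUnion_eq_biUnion_atom (T : Finset ι) :
    ⋃ x ∈ T, C x = ⋃ B ∈ T.biUnion fun x => {B | x ∈ B}, atom C B := by
  classical
  ext ω
  simp only [mem_iUnion, Finset.mem_biUnion, Finset.mem_filter, Finset.mem_univ, true_and,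
    exists_prop]
  constructor
  · rintro ⟨x, hx, hω⟩
    exact ⟨({y | ω ∈ C y} : Finset ι), ⟨x, hx, by simpa using hω⟩, fun y => by simp⟩
  · rintro ⟨B, ⟨x, hx, hxB⟩, hω⟩
    exact ⟨x, hx, atom_subset hxB hω⟩

variable [MeasurableSpace Ω] {μ : Measure Ω} [IsFiniteMeasure μ]

lemma hallCondition_atom (hC : ∀ x, MeasurableSet (C x)) {w : ι → ℝ}
    (hall : ∀ T : Finset ι, ENNReal.ofReal (∑ x ∈ T, w x) ≤ μ (⋃ x ∈ T, C x)) :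
    HallCondition (fun x => {B | x ∈ B}) Finset.univ w fun B => (μ (atom C B)).toReal := by
  intro T _
  have hT := hall T
  rwa [biUnion_eq_biUnion_atom, measure_biUnion_finset (pairwise_disjoint_atom.set_pairwise _)
    fun B _ => measurableSet_atom hC B, ENNReal.ofReal_le_iff_le_toReal
    (ENNReal.sum_ne_top.mpr fun _ _ => measure_ne_top _ _),
    ENNReal.toReal_sum fun _ _ => measure_ne_top _ _] at hT

lemma exists_disjoint_subsets_of_isTransport (hμ : Atomless μ) (hC : ∀ x, MeasurableSet (C x))
    {w : ι → ℝ} {d : ι → Finset ι → ℝ}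
    (hd : IsTransport (fun x => {B | x ∈ B}) Finset.univ w (fun B => (μ (atom C B)).toReal) d) :
    ∃ D : ι → Set Ω, (∀ x, MeasurableSet (D x)) ∧ (∀ x, D x ⊆ C x) ∧
      (∀ x, μ (D x) = ENNReal.ofReal (w x)) ∧ Pairwise (Disjoint on D) := by
  have hcarve (B : Finset ι) : ∃ E : ι → Set Ω, (∀ x ∈ Finset.univ, MeasurableSet (E x) ∧
      E x ⊆ atom C B ∧ μ (E x) = ENNReal.ofReal (d x B)) ∧
      ((Finset.univ : Finset ι) : Set ι).PairwiseDisjoint E := by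
    refine hμ.exists_pairwiseDisjoint_subsets _ _ (measurableSet_atom hC B) ?_
    rw [← ENNReal.ofReal_sum_of_nonneg fun x _ => hd.nonneg x B]
    exact ENNReal.ofReal_le_of_le_toReal (hd.sum_col_le B)
  choose E hE hEdisj using hcarve
  have hEatom (B : Finset ι) (x : ι) : E B x ⊆ atom C B := (hE B x (Finset.mem_univ x)).2.1
  refine ⟨fun x => ⋃ B ∈ ({B | x ∈ B} : Finset (Finset ι)), E B x, fun x => ?_, fun x => ?_,
    fun x => ?_, fun x y hxy => ?_⟩
  · exact Finset.measurableSet_biUnion _ fun B _ => (hE B x (Finset.mem_univ x)).1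
  · exact iUnion₂_subset fun B hB => (hEatom B x).trans (atom_subset (by simpa using hB))
  · rw [measure_biUnion_finset (fun B _ B' _ hne => (pairwise_disjoint_atom hne).mono
      (hEatom B x) (hEatom B' x)) fun B _ => (hE B x (Finset.mem_univ x)).1,
      ← hd.sum_row x (Finset.mem_univ x), ENNReal.ofReal_sum_of_nonneg fun B _ => hd.nonneg x B]
    exact Finset.sum_congr rfl fun B _ => (hE B x (Finset.mem_univ x)).2.2
  · simp only [onFun, disjoint_iUnion_left, disjoint_iUnion_right]
    intro B' _ B _
    rcases eq_or_ne B B' with rfl | hne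
    · exact hEdisj B (by simp) (by simp) hxy
    · exact (pairwise_disjoint_atom hne).mono (hEatom B x) (hEatom B' y)

end Atoms

lemma measure_biUnion_eq_ofReal_sum {Ω ι : Type*} [MeasurableSpace Ω] {μ : Measure Ω}
    {D : ι → Set Ω} {w : ι → ℝ} (hD : ∀ x, MeasurableSet (D x))
    (hdisj : Pairwise (AEDisjoint μ on D)) (hw : ∀ x, 0 ≤ w x)
    (hDμ : ∀ x, μ (D x) = ENNReal.ofReal (w x)) (T : Finset ι) :
    μ (⋃ x ∈ T, D x) = ENNReal.ofReal (∑ x ∈ T, w x) := by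
  rw [measure_biUnion_finset₀ (fun x _ y _ hxy => hdisj hxy) fun x _ => (hD x).nullMeasurableSet,
    ENNReal.ofReal_sum_of_nonneg fun x _ => hw x]
  exact Finset.sum_congr rfl fun x _ => hDμ x

/-- A probabilistic version of the Hall Marriage Theorem.  Let `(Ω, F, μ)` be an atomless
probability space (every event contains events of every smaller measure), `S` a finite set,
and for each `x ∈ S` a weight `w x ≥ 0` and an event `C x`.  Then `μ(C_T) ≥ W_T` for every
`T ⊆ S` if and only if there is a family of (a.e.) pairwise disjoint events `D x ⊆ C x`
with `μ(D x) = w x`; moreover if `W_S = 1` then any such family is a partition of `Ω` up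
to null measure. -/
theorem probability_hall {Ω : Type*} [MeasurableSpace Ω] (μ : Measure Ω)
    [IsProbabilityMeasure μ]
    (hatomless : ∀ s : Set Ω, MeasurableSet s → ∀ r : ENNReal, r ≤ μ s →
      ∃ t : Set Ω, t ⊆ s ∧ MeasurableSet t ∧ μ t = r)
    {S : Type*} [Fintype S] (w : S → ℝ) (hw : ∀ x, 0 ≤ w x)
    (C : S → Set Ω) (hC : ∀ x, MeasurableSet (C x)) :
    ((∀ T : Finset S, ENNReal.ofReal (∑ x ∈ T, w x) ≤ μ (⋃ x ∈ T, C x)) ↔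
      ∃ D : S → Set Ω, (∀ x, MeasurableSet (D x)) ∧ (∀ x, D x ⊆ C x) ∧
        (∀ x, μ (D x) = ENNReal.ofReal (w x)) ∧
        ∀ x y : S, x ≠ y → μ (D x ∩ D y) = 0) ∧
    ((∑ x : S, w x) = 1 →
      ∀ D : S → Set Ω, (∀ x, MeasurableSet (D x)) → (∀ x, D x ⊆ C x) →
        (∀ x, μ (D x) = ENNReal.ofReal (w x)) →
        (∀ x y : S, x ≠ y → μ (D x ∩ D y) = 0) →
        μ (⋃ x : S, D x) = 1) := by
  classical
  refine ⟨⟨fun hall => ?_, fun ⟨D, hD, hDC, hDμ, hdisj⟩ T => ?_⟩,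
    fun hw₁ D hD _ hDμ hdisj => ?_⟩
  · obtain ⟨d, hd⟩ := exists_isTransport_of_hallCondition (fun x _ => hw x)
      (fun _ => ENNReal.toReal_nonneg) (hallCondition_atom hC hall)
    obtain ⟨D, hD, hDC, hDμ, hdisj⟩ := exists_disjoint_subsets_of_isTransport hatomless hC hd
    exact ⟨D, hD, hDC, hDμ, fun x y hxy => by rw [(hdisj hxy).inter_eq, measure_empty]⟩
  · rw [← measure_biUnion_eq_ofReal_sum hD hdisj hw hDμ]
    exact measure_mono (iUnion₂_mono fun x _ => hDC x)
  · simpa [hw₁] using measure_biUnion_eq_ofReal_sum hD hdisj hw hDμ Finset.univ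

end Stmt18
end

section
/- Let Ω be a set and τ : Ω → Ω a bijection. Then there exists a finitely additive probability integration functional E : ([0,1]^Ω) → [0,1] which is invariant under τ; that is, E satisfies E(1) = 1 (for the constant function 1), E(X + Y) = E(X) + E(Y) whenever X, Y and X + Y all take values in [0,1], and E(X ∘ τ) = E(X) for every X : Ω → [0,1]. -/
namespace Stmt19

open Set Filter

/-- For any set `Ω` and any bijection `τ : Ω → Ω`, there exists a finitely additive
probability integration functional `E` on `[0,1]^Ω` which is invariant under `τ`:
`E(1) = 1`, `E(X + Y) = E(X) + E(Y)` whenever `X`, `Y` and `X + Y` are `[0,1]`-valued,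
and `E(X ∘ τ) = E(X)` for every `[0,1]`-valued `X`. -/
theorem exists_invariant_integration {Ω : Type*} [Nonempty Ω]
    (τ : Ω → Ω) (hτ : Function.Bijective τ) :
    ∃ E : (Ω → ℝ) → ℝ,
      (∀ X : Ω → ℝ, (∀ ω, X ω ∈ Icc (0 : ℝ) 1) → E X ∈ Icc (0 : ℝ) 1) ∧
      E (fun _ => 1) = 1 ∧
      (∀ X Y : Ω → ℝ, (∀ ω, X ω ∈ Icc (0 : ℝ) 1) → (∀ ω, Y ω ∈ Icc (0 : ℝ) 1) →
        (∀ ω, X ω + Y ω ∈ Icc (0 : ℝ) 1) → E (fun ω => X ω + Y ω) = E X + E Y) ∧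
      (∀ X : Ω → ℝ, (∀ ω, X ω ∈ Icc (0 : ℝ) 1) → E (X ∘ τ) = E X) := by
  classical
  obtain ⟨ω₀⟩ := ‹Nonempty Ω›
  set c : (Ω → ℝ) → Ω → ℝ := fun X ω => min 1 (max 0 (X ω)) with hc
  have hcmem : ∀ X ω, c X ω ∈ Icc (0 : ℝ) 1 := by
    intro X ω
    exact ⟨le_min zero_le_one (le_max_left _ _), min_le_left _ _⟩
  have hceq : ∀ X : Ω → ℝ, (∀ ω, X ω ∈ Icc (0 : ℝ) 1) → c X = X := by
    intro X hX; funext ω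
    simp [hc, max_eq_right (hX ω).1, min_eq_right (hX ω).2]
  set f : (Ω → ℝ) → ℕ → ℝ :=
    fun X n => (∑ k ∈ Finset.range n, X (τ^[k] ω₀)) / n with hf
  have hfmem : ∀ X : Ω → ℝ, (∀ ω, X ω ∈ Icc (0 : ℝ) 1) → ∀ n, f X n ∈ Icc (0 : ℝ) 1 := by
    intro X hX n
    rcases Nat.eq_zero_or_pos n with h | h
    · simp [hf, h]
    constructor
    · exact div_nonneg (Finset.sum_nonneg fun k _ => (hX _).1) (Nat.cast_nonneg n)
    · rw [div_le_one (by exact_mod_cast h)]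
      calc ∑ k ∈ Finset.range n, X (τ^[k] ω₀) ≤ ∑ k ∈ Finset.range n, 1 :=
            Finset.sum_le_sum fun k _ => (hX _).2
        _ = n := by simp
  obtain ⟨U, hU⟩ : ∃ U : Ultrafilter ℕ, ↑U ≤ (atTop : Filter ℕ) :=
    ⟨Ultrafilter.of atTop, Ultrafilter.of_le _⟩
  have hlim : ∀ X : Ω → ℝ, ∃ L, L ∈ Icc (0 : ℝ) 1 ∧ Tendsto (f (c X)) U (nhds L) := by
    intro X
    have hle : ↑(U.map (f (c X))) ≤ Filter.principal (Icc (0 : ℝ) 1) := by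
      rw [Ultrafilter.coe_map]
      refine le_principal_iff.2 (mem_map.2 ?_)
      exact Filter.univ_mem' fun n => hfmem _ (hcmem X) n
    obtain ⟨L, hL, hLe⟩ := (isCompact_Icc (a := (0 : ℝ)) (b := 1)).ultrafilter_le_nhds
      (U.map (f (c X))) hle
    exact ⟨L, hL, hLe⟩
  choose E hE1 hE2 using hlim
  refine ⟨E, fun X _ => hE1 X, ?_, ?_, ?_⟩
  · -- E 1 = 1
    have h1 : Tendsto (f (c fun _ => 1)) U (nhds 1) := by
      have hcc : c (fun _ => 1) = fun _ => (1 : ℝ) := hceq _ (fun ω => by norm_num)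
      have : ∀ n : ℕ, 1 ≤ n → f (c fun _ => 1) n = 1 := by
        intro n hn
        have hn' : (n : ℝ) ≠ 0 := Nat.cast_ne_zero.mpr (by omega)
        simp [hf, hcc, hn']
      refine tendsto_const_nhds.congr' ?_
      filter_upwards [hU (eventually_ge_atTop 1)] with n hn using (this n hn).symm
    exact tendsto_nhds_unique (hE2 _) h1
  · -- additivity
    intro X Y hX hY hXY
    have hsum : f (c fun ω => X ω + Y ω) = fun n => f (c X) n + f (c Y) n := by
      funext n
      rw [hceq _ hXY, hceq _ hX, hceq _ hY]
      simp [hf, Finset.sum_add_distrib, add_div]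
    have : Tendsto (f (c fun ω => X ω + Y ω)) U (nhds (E X + E Y)) := by
      rw [hsum]; exact (hE2 X).add (hE2 Y)
    exact tendsto_nhds_unique (hE2 _) this
  · -- invariance
    intro X hX
    have hXτ : ∀ ω, (X ∘ τ) ω ∈ Icc (0 : ℝ) 1 := fun ω => hX (τ ω)
    have hkey : ∀ n : ℕ, f (c (X ∘ τ)) n = f (c X) n + (X (τ^[n] ω₀) - X ω₀) / n := by
      intro n
      rw [hceq _ hXτ, hceq _ hX]
      have hshift : ∑ k ∈ Finset.range n, (X ∘ τ) (τ^[k] ω₀)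
          = ∑ k ∈ Finset.range n, X (τ^[k] ω₀) + (X (τ^[n] ω₀) - X ω₀) := by
        have h1 : ∀ k, (X ∘ τ) (τ^[k] ω₀) = X (τ^[k + 1] ω₀) := by
          intro k; simp [Function.iterate_succ_apply']
        calc ∑ k ∈ Finset.range n, (X ∘ τ) (τ^[k] ω₀)
            = ∑ k ∈ Finset.range n, X (τ^[k + 1] ω₀) := by
              exact Finset.sum_congr rfl fun k _ => h1 k
          _ = ∑ k ∈ Finset.range (n + 1), X (τ^[k] ω₀) - X (τ^[0] ω₀) := by
              rw [Finset.sum_range_succ']; ring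
          _ = ∑ k ∈ Finset.range n, X (τ^[k] ω₀) + (X (τ^[n] ω₀) - X ω₀) := by
              rw [Finset.sum_range_succ]; simp; ring
      simp only [hf, hshift, add_div]
    have hzero : Tendsto (fun n : ℕ => (X (τ^[n] ω₀) - X ω₀) / n) atTop (nhds 0) := by
      have hb : ∀ n : ℕ, ‖(X (τ^[n] ω₀) - X ω₀) / n‖ ≤ 1 / n := by
        intro n
        rcases Nat.eq_zero_or_pos n with h | h
        · simp [h]
        have hn' : (0 : ℝ) < n := by exact_mod_cast h
        rw [norm_div, Real.norm_natCast, div_le_div_iff_of_pos_right hn']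
        have h1 := hX (τ^[n] ω₀)
        have h2 := hX ω₀
        rw [Real.norm_eq_abs, abs_le]
        constructor <;> [linarith [h1.1, h2.2]; linarith [h1.2, h2.1]]
      exact squeeze_zero_norm hb tendsto_one_div_atTop_nhds_zero_nat
    have : Tendsto (f (c (X ∘ τ))) U (nhds (E X)) := by
      have h1 : Tendsto (fun n => f (c X) n + (X (τ^[n] ω₀) - X ω₀) / n) U
          (nhds (E X + 0)) := (hE2 X).add (hzero.mono_left hU)
      rw [add_zero] at h1
      exact h1.congr fun n => (hkey n).symm
    exact tendsto_nhds_unique (hE2 (X ∘ τ)) this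
end Stmt19
end
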